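/- arXiv:1811.08359 — 13 statements merged into one kernel-verified Lean document; each statement's English description precedes it below -/
import Mathlib

section
/- The ideal non-extended formulation is valid for the ReLU neuron: a pair (x, y) satisfies the constraints of P together with z ∈ {0,1} for some z if and only if (x, y) lies on the graph of the ReLU neuron. Formally, {(x, y) : ∃ z, (z = 0 ∨ z = 1) ∧ (x, y, z) ∈ P} = gr. -/
open Finset

/-- The affine function `f(x) = w · x + b`. -/
noncomputable def fAff {η : ℕ} (w : Fin η → ℝ) (b : ℝ) (x : Fin η → ℝ) : ℝ :=
  (∑ i, w i * x i) + b

/-- The rectified linear unit. -/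
noncomputable def ReLU (v : ℝ) : ℝ := max 0 v

/-- The box `[L, U]`. -/
def Box {η : ℕ} (L U : Fin η → ℝ) : Set (Fin η → ℝ) :=
  {x | ∀ i, L i ≤ x i ∧ x i ≤ U i}

/-- `L̆ i`. -/
noncomputable def Lbreve {η : ℕ} (w L U : Fin η → ℝ) (i : Fin η) : ℝ :=
  if 0 ≤ w i then L i else U i

/-- `Ŭ i`. -/
noncomputable def Ubreve {η : ℕ} (w L U : Fin η → ℝ) (i : Fin η) : ℝ :=
  if 0 ≤ w i then U i else L i

/-- The graph of the ReLU neuron over the box. -/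
noncomputable def grSet {η : ℕ} (w : Fin η → ℝ) (b : ℝ) (L U : Fin η → ℝ) :
    Set ((Fin η → ℝ) × ℝ) :=
  {p | ∃ x ∈ Box L U, p = (x, ReLU (fAff w b x))}

/-- The LP relaxation `P` of the ideal non-extended formulation. A point is
`(x, y, z)` with `x = p.1`, `y = p.2.1`, `z = p.2.2`. -/
noncomputable def Pset {η : ℕ} (w : Fin η → ℝ) (b : ℝ) (L U : Fin η → ℝ) :
    Set ((Fin η → ℝ) × ℝ × ℝ) :=
  {p | p.1 ∈ Box L U ∧ 0 ≤ p.2.1 ∧ 0 ≤ p.2.2 ∧ p.2.2 ≤ 1 ∧ fAff w b p.1 ≤ p.2.1 ∧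
    ∀ I : Finset (Fin η), (∀ i ∈ I, w i ≠ 0) →
      p.2.1 ≤ (∑ i ∈ I, w i * (p.1 i - Lbreve w L U i * (1 - p.2.2)))
        + (b + ∑ i ∈ Iᶜ, w i * Ubreve w L U i) * p.2.2}

/-- The LP relaxation `R` of the big-`M` formulation. -/
noncomputable def Rset {η : ℕ} (w : Fin η → ℝ) (b : ℝ) (L U : Fin η → ℝ) :
    Set ((Fin η → ℝ) × ℝ × ℝ) :=
  {p | p.1 ∈ Box L U ∧ 0 ≤ p.2.1 ∧ 0 ≤ p.2.2 ∧ p.2.2 ≤ 1 ∧ fAff w b p.1 ≤ p.2.1 ∧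
    p.2.1 ≤ fAff w b p.1 - ((∑ i, w i * Lbreve w L U i) + b) * (1 - p.2.2) ∧
    p.2.1 ≤ ((∑ i, w i * Ubreve w L U i) + b) * p.2.2}

/-- The LP relaxation `Q` of the multiple-choice extended formulation. A point is
`(x, y, z, x⁰, x¹, y⁰, y¹)`. -/
noncomputable def Qset {η : ℕ} (w : Fin η → ℝ) (b : ℝ) (L U : Fin η → ℝ) :
    Set ((Fin η → ℝ) × ℝ × ℝ × (Fin η → ℝ) × (Fin η → ℝ) × ℝ × ℝ) :=
  {q | match q with
    | (x, y, z, x0, x1, y0, y1) =>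
      x = x0 + x1 ∧ y = y0 + y1 ∧ y0 = 0 ∧
      (∑ i, w i * x0 i) + b * (1 - z) ≤ 0 ∧
      y1 = (∑ i, w i * x1 i) + b * z ∧ 0 ≤ y1 ∧
      (∀ i, L i * (1 - z) ≤ x0 i ∧ x0 i ≤ U i * (1 - z)) ∧
      (∀ i, L i * z ≤ x1 i ∧ x1 i ≤ U i * z) ∧
      0 ≤ z ∧ z ≤ 1}

/-- Validity of the ideal non-extended formulation for the ReLU neuron. -/
theorem ideal_formulation_valid {η : ℕ} (w : Fin η → ℝ) (b : ℝ) (L U : Fin η → ℝ)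
    (hLU : ∀ i, L i < U i) :
    {p : (Fin η → ℝ) × ℝ |
        ∃ z : ℝ, (z = 0 ∨ z = 1) ∧ (p.1, p.2, z) ∈ Pset w b L U}
      = grSet w b L U := by
  ext ⟨x, y⟩
  simp only [Set.mem_setOf_eq, grSet, Pset, Box]
  constructor
  · rintro ⟨z, hz01, hbox, hy0, hz0, hz1, hfy, hI⟩
    refine ⟨x, hbox, ?_⟩
    rcases hz01 with rfl | rfl
    · -- z = 0
      have h0 := hI ∅ (by simp)
      simp only [Finset.sum_empty, mul_zero, add_zero, zero_add] at h0
      have hy : y = 0 := le_antisymm h0 hy0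
      have hf0 : fAff w b x ≤ 0 := hy ▸ hfy
      simp [ReLU, hy, max_eq_left hf0]
    · -- z = 1
      set I := Finset.univ.filter (fun i => w i ≠ 0) with hIdef
      have h1 := hI I (by intro i hi; simpa [hIdef] using hi)
      have hs1 : ∑ i ∈ I, w i * (x i - Lbreve w L U i * (1 - 1)) = ∑ i, w i * x i := by
        simp only [sub_self, mul_zero, sub_zero, hIdef]
        exact Finset.sum_filter_of_ne (fun i _ h => by
          intro hw; apply h; simp [hw])
      have hs2 : ∑ i ∈ Iᶜ, w i * Ubreve w L U i = 0 := by
        apply Finset.sum_eq_zero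
        intro i hi
        have : w i = 0 := by
          by_contra hw
          exact (Finset.mem_compl.mp hi) (by simp [hIdef, hw])
        simp [this]
      rw [hs1, hs2, add_zero, mul_one] at h1
      have hyf : y = fAff w b x := le_antisymm h1 hfy
      have : ReLU (fAff w b x) = fAff w b x := max_eq_right (hyf ▸ hy0)
      rw [this, ← hyf]
  · rintro ⟨x', hbox, heq⟩
    obtain ⟨rfl, rfl⟩ := Prod.mk.injEq .. ▸ heq
    by_cases hf : 0 ≤ fAff w b x
    · refine ⟨1, Or.inr rfl, hbox, le_max_left _ _, zero_le_one, le_refl 1,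
        le_max_right _ _, ?_⟩
      intro I hI
      have hy : ReLU (fAff w b x) = fAff w b x := max_eq_right hf
      rw [hy]
      simp only [sub_self, mul_zero, sub_zero, mul_one]
      have hsplit : fAff w b x = (∑ i ∈ I, w i * x i) + ((∑ i ∈ Iᶜ, w i * x i) + b) := by
        rw [fAff, ← Finset.sum_add_sum_compl I (fun i => w i * x i), add_assoc]
      rw [hsplit]
      have hle : ∑ i ∈ Iᶜ, w i * x i ≤ ∑ i ∈ Iᶜ, w i * Ubreve w L U i := by
        apply Finset.sum_le_sum
        intro i _
        rcases le_or_gt 0 (w i) with h | h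
        · rw [Ubreve, if_pos h]
          exact mul_le_mul_of_nonneg_left (hbox i).2 h
        · rw [Ubreve, if_neg (not_le.mpr h)]
          exact mul_le_mul_of_nonpos_left (hbox i).1 h.le
      linarith
    · refine ⟨0, Or.inl rfl, hbox, ?_, le_refl 0, zero_le_one, ?_, ?_⟩
      · exact le_max_left _ _
      · rw [ReLU, max_eq_left (not_le.mp hf).le]
        exact (not_le.mp hf).le
      · intro I hI
        rw [ReLU, max_eq_left (not_le.mp hf).le]
        simp only [mul_zero, add_zero, sub_zero]
        apply Finset.sum_nonneg
        intro i _
        rcases le_or_gt 0 (w i) with h | h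
        · rw [Lbreve, if_pos h]
          exact mul_nonneg h (by linarith [(hbox i).1])
        · rw [Lbreve, if_neg (not_le.mpr h)]
          exact by nlinarith [(hbox i).2]
end

section
/- The ideal non-extended formulation for the ReLU neuron is ideal: its LP relaxation P equals the convex hull of its integer-feasible points, i.e. P = convexHull ℝ (A ∪ B), where A = {(x, 0, 0) : x ∈ [L,U], f x ≤ 0} and B = {(x, f x, 1) : x ∈ [L,U], 0 ≤ f x}. -/
/-!
Write a point `(x, y, z)` of `P` with `0 < z < 1` as `(1 - z) • (x⁰, 0, 0) + z • (x¹, f x¹, 1)`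
with `x¹ = v / z` and `x⁰ = (x - v) / (1 - z)`. These are points of the `z = 1` and `z = 0`
branches exactly when `v` lies in the box `z • [L, U] ∩ (x - (1 - z) • [L, U])` and
`w ⬝ᵥ v = y - b z`. On that box the linear form `w ⬝ᵥ ·` takes a value `≤ y - b z` at
`v = z • x` (as `z f x ≤ y`), and a value `≥ y - b z` at its maximizing corner, since this
maximum is the right-hand side of the most violated cut of `P`. The intermediate value theorem
provides `v`. Conversely every constraint of `P` is affine in `(x, y, z)`, so `P` is convex and
contains both branches.
-/

open Finset

lemma exists_dotProduct_eq_of_mem_Icc {ι : Type*} [Fintype ι] (w : ι → ℝ) {l u a c : ι → ℝ}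
    (ha : a ∈ Set.Icc l u) (hc : c ∈ Set.Icc l u) {t : ℝ} (hat : w ⬝ᵥ a ≤ t) (htc : t ≤ w ⬝ᵥ c) :
    ∃ v ∈ Set.Icc l u, w ⬝ᵥ v = t :=
  (convex_Icc l u).isPreconnected.intermediate_value ha hc (by fun_prop) ⟨hat, htc⟩

lemma inv_smul_mem_Icc {ι : Type*} {c : ℝ} (hc : 0 < c) {v L U : ι → ℝ}
    (hv : v ∈ Set.Icc (c • L) (c • U)) : c⁻¹ • v ∈ Set.Icc L U :=
  ⟨(le_inv_smul_iff_of_pos hc).2 hv.1, (inv_smul_le_iff_of_pos hc).2 hv.2⟩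

section

variable {η : ℕ} (w : Fin η → ℝ) (b : ℝ) (L U : Fin η → ℝ)

lemma fAff_eq_dotProduct (x : Fin η → ℝ) : fAff w b x = w ⬝ᵥ x + b := rfl

lemma box_eq_Icc : Box L U = Set.Icc L U := by
  ext x
  simp [Box, Pi.le_def, forall_and]

lemma fAff_convexComb {a a' : ℝ} (hab : a + a' = 1) (x x' : Fin η → ℝ) :
    fAff w b (a • x + a' • x') = a * fAff w b x + a' * fAff w b x' := by
  simp only [fAff_eq_dotProduct, dotProduct_add, dotProduct_smul, smul_eq_mul]
  linear_combination (-b) * hab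

noncomputable def cutBound (I : Finset (Fin η)) (x : Fin η → ℝ) (z : ℝ) : ℝ :=
  (∑ i ∈ I, w i * (x i - Lbreve w L U i * (1 - z))) + (b + ∑ i ∈ Iᶜ, w i * Ubreve w L U i) * z

lemma cutBound_convexComb {a a' : ℝ} (hab : a + a' = 1) (I : Finset (Fin η))
    (x x' : Fin η → ℝ) (z z' : ℝ) :
    cutBound w b L U I (a • x + a' • x') (a * z + a' * z') =
      a * cutBound w b L U I x z + a' * cutBound w b L U I x' z' := by
  have hI : ∑ i ∈ I, w i * ((a • x + a' • x') i - Lbreve w L U i * (1 - (a * z + a' * z'))) =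
      a * ∑ i ∈ I, w i * (x i - Lbreve w L U i * (1 - z)) +
        a' * ∑ i ∈ I, w i * (x' i - Lbreve w L U i * (1 - z')) := by
    rw [mul_sum, mul_sum, ← sum_add_distrib]
    refine sum_congr rfl fun i _ => ?_
    simp only [Pi.add_apply, Pi.smul_apply, smul_eq_mul]
    linear_combination (w i * Lbreve w L U i) * hab
  simp only [cutBound]
  rw [hI]
  ring

lemma mul_Lbreve_le {x : Fin η → ℝ} (hx : x ∈ Box L U) (i : Fin η) :
    w i * Lbreve w L U i ≤ w i * x i := by
  unfold Lbreve
  split_ifs with h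
  · exact mul_le_mul_of_nonneg_left (hx i).1 h
  · exact mul_le_mul_of_nonpos_left (hx i).2 (not_le.1 h).le

lemma le_mul_Ubreve {x : Fin η → ℝ} (hx : x ∈ Box L U) (i : Fin η) :
    w i * x i ≤ w i * Ubreve w L U i := by
  unfold Ubreve
  split_ifs with h
  · exact mul_le_mul_of_nonneg_left (hx i).2 h
  · exact mul_le_mul_of_nonpos_left (hx i).1 (not_le.1 h).le

lemma convex_Pset : Convex ℝ (Pset w b L U) := by
  rintro ⟨x, y, z⟩ ⟨hx, hy, hz0, hz1, hfy, hcut⟩ ⟨x', y', z'⟩ ⟨hx', hy', hz0', hz1', hfy', hcut'⟩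
    a a' ha ha' hab
  simp only at hx hy hz0 hz1 hfy hcut hx' hy' hz0' hz1' hfy' hcut'
  rw [box_eq_Icc] at hx hx'
  refine ⟨?_, (convex_Ici (0 : ℝ)) hy hy' ha ha' hab, (convex_Ici (0 : ℝ)) hz0 hz0' ha ha' hab,
    (convex_Iic (1 : ℝ)) hz1 hz1' ha ha' hab, ?_, fun I hI => ?_⟩
  · rw [box_eq_Icc]
    exact (convex_Icc L U) hx hx' ha ha' hab
  · show fAff w b (a • x + a' • x') ≤ a * y + a' * y'
    rw [fAff_convexComb w b hab]
    gcongr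
  · show a * y + a' * y' ≤ cutBound w b L U I (a • x + a' • x') (a * z + a' * z')
    rw [cutBound_convexComb w b L U hab]
    exact add_le_add (mul_le_mul_of_nonneg_left (hcut I hI) ha)
      (mul_le_mul_of_nonneg_left (hcut' I hI) ha')

def intFeasible : Set ((Fin η → ℝ) × ℝ × ℝ) :=
  {p | ∃ x ∈ Box L U, fAff w b x ≤ 0 ∧ p = (x, 0, 0)} ∪
    {p | ∃ x ∈ Box L U, 0 ≤ fAff w b x ∧ p = (x, fAff w b x, 1)}

lemma intFeasible_subset_Pset : intFeasible w b L U ⊆ Pset w b L U := by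
  classical
  rintro _ (⟨x, hx, hf, rfl⟩ | ⟨x, hx, hf, rfl⟩)
  · refine ⟨hx, le_rfl, le_rfl, zero_le_one, hf, fun I _ => ?_⟩
    simp only [sub_zero, mul_one, mul_zero, add_zero]
    exact sum_nonneg fun i _ => by rw [mul_sub]; exact sub_nonneg.2 (mul_Lbreve_le w L U hx i)
  · refine ⟨hx, hf, zero_le_one, le_rfl, le_rfl, fun I _ => ?_⟩
    simp only [sub_self, mul_zero, sub_zero, mul_one]
    rw [fAff_eq_dotProduct, dotProduct, ← sum_add_sum_compl I]
    linarith [sum_le_sum fun i (_ : i ∈ Iᶜ) => le_mul_Ubreve w L U hx i]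

lemma le_add_sum_min_of_mem_Pset {x : Fin η → ℝ} {y z : ℝ} (hp : (x, y, z) ∈ Pset w b L U) :
    y ≤ b * z + ∑ i, min (w i * (x i - Lbreve w L U i * (1 - z))) (w i * Ubreve w L U i * z) := by
  classical
  -- The most violated cut: a strict inequality here forces `w i ≠ 0`.
  set I := univ.filter fun i => w i * (x i - Lbreve w L U i * (1 - z)) < w i * Ubreve w L U i * z
  have hI : ∀ i ∈ I, w i ≠ 0 := fun i hi hw => by simp [I, hw] at hi
  calc y ≤ cutBound w b L U I x z := hp.2.2.2.2.2 I hI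
    _ = _ := by
      rw [cutBound, add_mul, sum_mul, ← sum_add_sum_compl I]
      have hin : ∀ i ∈ I, w i * (x i - Lbreve w L U i * (1 - z)) =
          min (w i * (x i - Lbreve w L U i * (1 - z))) (w i * Ubreve w L U i * z) :=
        fun i hi => (min_eq_left (mem_filter.1 hi).2.le).symm
      have hout : ∀ i ∈ Iᶜ, w i * Ubreve w L U i * z =
          min (w i * (x i - Lbreve w L U i * (1 - z))) (w i * Ubreve w L U i * z) :=
        fun i hi => (min_eq_right (not_lt.1 fun h => mem_compl.1 hi (by simp [I, h]))).symm
      rw [sum_congr rfl hin, sum_congr rfl hout]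
      ring

lemma exists_split_of_mem_Pset {x : Fin η → ℝ} {y z : ℝ} (hp : (x, y, z) ∈ Pset w b L U) :
    ∃ v, v ∈ Set.Icc (z • L) (z • U) ∧ x - v ∈ Set.Icc ((1 - z) • L) ((1 - z) • U) ∧
      w ⬝ᵥ v + b * z = y := by
  have hmin := le_add_sum_min_of_mem_Pset w b L U hp
  obtain ⟨hx, hy, hz0, hz1, hfy, -⟩ := hp
  simp only at hx hy hz0 hz1 hfy
  rw [box_eq_Icc] at hx
  have hz1' : 0 ≤ 1 - z := sub_nonneg.2 hz1
  set l := z • L ⊔ (x - (1 - z) • U)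
  set u := z • U ⊓ (x - (1 - z) • L)
  have mem_iff : ∀ v, v ∈ Set.Icc l u ↔
      v ∈ Set.Icc (z • L) (z • U) ∧ x - v ∈ Set.Icc ((1 - z) • L) ((1 - z) • U) := fun v => by
    simp only [l, u, Set.mem_Icc, sup_le_iff, le_inf_iff, sub_le_comm, le_sub_comm]
    tauto
  have hzx : z • x ∈ Set.Icc l u := by
    rw [mem_iff, show x - z • x = (1 - z) • x by rw [sub_smul, one_smul]]
    exact ⟨⟨smul_le_smul_of_nonneg_left hx.1 hz0, smul_le_smul_of_nonneg_left hx.2 hz0⟩,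
      ⟨smul_le_smul_of_nonneg_left hx.1 hz1', smul_le_smul_of_nonneg_left hx.2 hz1'⟩⟩
  have hlu : l ≤ u := hzx.1.trans hzx.2
  set c : Fin η → ℝ := fun i => if 0 ≤ w i then u i else l i
  have hc : c ∈ Set.Icc l u := by
    constructor <;> intro i <;> dsimp only [c] <;> split_ifs
    exacts [hlu i, le_rfl, le_rfl, hlu i]
  have hlow : w ⬝ᵥ (z • x) ≤ y - b * z := by
    rw [dotProduct_smul, smul_eq_mul]
    nlinarith [fAff_eq_dotProduct w b x]
  -- `c` is the corner of `[l, u]` maximizing `w ⬝ᵥ ·`.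
  have hcorner : ∀ i, w i * c i =
      min (w i * (x i - Lbreve w L U i * (1 - z))) (w i * Ubreve w L U i * z) := by
    intro i
    simp only [c, l, u, Pi.sup_apply, Pi.inf_apply, Pi.sub_apply, Pi.smul_apply, smul_eq_mul,
      Lbreve, Ubreve]
    split_ifs with hw
    · rw [mul_min_of_nonneg _ _ hw, min_comm]
      congr 1 <;> ring
    · rw [Antitone.map_max fun s t hst => mul_le_mul_of_nonpos_left hst (not_le.1 hw).le,
        min_comm]
      congr 1 <;> ring
  have hhigh : y - b * z ≤ w ⬝ᵥ c := by
    simp only [dotProduct, hcorner]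
    linarith
  obtain ⟨v, hv, hwv⟩ := exists_dotProduct_eq_of_mem_Icc w hzx hc hlow hhigh
  exact ⟨v, ((mem_iff v).1 hv).1, ((mem_iff v).1 hv).2, by linarith⟩

lemma mem_convexHull_of_split {x v : Fin η → ℝ} {y z : ℝ} (hz0 : 0 < z) (hz1 : z < 1)
    (hv : v ∈ Set.Icc (z • L) (z • U)) (hxv : x - v ∈ Set.Icc ((1 - z) • L) ((1 - z) • U))
    (hwv : w ⬝ᵥ v + b * z = y) (hfy : fAff w b x ≤ y) (hy : 0 ≤ y) :
    (x, y, z) ∈ convexHull ℝ (intFeasible w b L U) := by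
  have h1z : 0 < 1 - z := sub_pos.2 hz1
  set x₀ := (1 - z)⁻¹ • (x - v)
  set x₁ := z⁻¹ • v
  have hf₀ : (1 - z) * fAff w b x₀ = fAff w b x - y := by
    simp only [x₀, fAff_eq_dotProduct, dotProduct_smul, dotProduct_sub, smul_eq_mul]
    field_simp
    linarith
  have hf₁ : z * fAff w b x₁ = y := by
    simp only [x₁, fAff_eq_dotProduct, dotProduct_smul, smul_eq_mul]
    field_simp
    linarith
  have h₀ : (x₀, (0 : ℝ), (0 : ℝ)) ∈ intFeasible w b L U :=
    Or.inl ⟨x₀, by rw [box_eq_Icc]; exact inv_smul_mem_Icc h1z hxv,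
      nonpos_of_mul_nonpos_right (by linarith) h1z, rfl⟩
  have h₁ : (x₁, fAff w b x₁, (1 : ℝ)) ∈ intFeasible w b L U :=
    Or.inr ⟨x₁, by rw [box_eq_Icc]; exact inv_smul_mem_Icc hz0 hv,
      nonneg_of_mul_nonneg_right (by linarith) hz0, rfl⟩
  have hsplit : (1 - z) • (x₀, (0 : ℝ), (0 : ℝ)) + z • (x₁, fAff w b x₁, (1 : ℝ)) = (x, y, z) := by
    simp only [x₀, x₁, Prod.smul_mk, Prod.mk_add_mk, smul_inv_smul₀ h1z.ne', smul_inv_smul₀ hz0.ne',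
      smul_eq_mul, hf₁, sub_add_cancel, mul_zero, mul_one, zero_add]
  rw [← hsplit]
  exact convex_convexHull ℝ _ (subset_convexHull ℝ _ h₀) (subset_convexHull ℝ _ h₁) h1z.le hz0.le
    (sub_add_cancel 1 z)

lemma Pset_subset_convexHull : Pset w b L U ⊆ convexHull ℝ (intFeasible w b L U) := by
  rintro ⟨x, y, z⟩ hp
  have hmin := le_add_sum_min_of_mem_Pset w b L U hp
  obtain ⟨hx, hy, hz0, hz1, hfy, -⟩ := id hp
  simp only at hx hy hz0 hz1 hfy
  rcases hz0.eq_or_lt with rfl | hz0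
  · have hy0 : y ≤ 0 := hmin.trans (by
      simpa using sum_le_sum fun i (_ : i ∈ univ) => min_le_right
        (w i * (x i - Lbreve w L U i * (1 - 0))) (w i * Ubreve w L U i * 0))
    obtain rfl := le_antisymm hy0 hy
    exact subset_convexHull ℝ _ (Or.inl ⟨x, hx, hfy, rfl⟩)
  rcases hz1.eq_or_lt with rfl | hz1
  · have hyf : y ≤ fAff w b x := hmin.trans (by
      simpa [fAff_eq_dotProduct, dotProduct, add_comm] using sum_le_sum fun i (_ : i ∈ univ) =>
        min_le_left (w i * (x i - Lbreve w L U i * (1 - 1))) (w i * Ubreve w L U i * 1))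
    obtain rfl := le_antisymm hyf hfy
    exact subset_convexHull ℝ _ (Or.inr ⟨x, hx, hy, rfl⟩)
  obtain ⟨v, hv, hxv, hwv⟩ := exists_split_of_mem_Pset w b L U hp
  exact mem_convexHull_of_split w b L U hz0 hz1 hv hxv hwv hfy hy

end

theorem ideal_formulation_ideal_general {η : ℕ} (w : Fin η → ℝ) (b : ℝ) (L U : Fin η → ℝ) :
    Pset w b L U = convexHull ℝ
      ({p : (Fin η → ℝ) × ℝ × ℝ |
          ∃ x ∈ Box L U, fAff w b x ≤ 0 ∧ p = (x, 0, 0)} ∪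
       {p : (Fin η → ℝ) × ℝ × ℝ |
          ∃ x ∈ Box L U, 0 ≤ fAff w b x ∧ p = (x, fAff w b x, 1)}) :=
  (Pset_subset_convexHull w b L U).antisymm
    (convexHull_min (intFeasible_subset_Pset w b L U) (convex_Pset w b L U))

/-- The ideal non-extended formulation is ideal: its LP relaxation equals the convex
hull of its integer-feasible points. -/
theorem ideal_formulation_ideal {η : ℕ} (w : Fin η → ℝ) (b : ℝ) (L U : Fin η → ℝ)
    (hLU : ∀ i, L i < U i) :
    Pset w b L U = convexHull ℝ
      ({p : (Fin η → ℝ) × ℝ × ℝ |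
          ∃ x ∈ Box L U, fAff w b x ≤ 0 ∧ p = (x, 0, 0)} ∪
       {p : (Fin η → ℝ) × ℝ × ℝ |
          ∃ x ∈ Box L U, 0 ≤ fAff w b x ∧ p = (x, fAff w b x, 1)}) :=
  ideal_formulation_ideal_general w b L U
end

section
/- Each upper-bounding inequality of the ideal non-extended formulation is facet-defining under strict activity: if M⁻ < 0 < M⁺, then for every I ⊆ supp(w) there exist η + 2 affinely independent points of P, each of which satisfies the inequality y ≤ (∑ i ∈ I, w i * (x i − L̆ i * (1 − z))) + (b + ∑ i ∉ I, w i * Ŭ i) * z with equality. -/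
open Finset

/-! On the box, `w i * (x i - L̆ i)` and `w i * (Ŭ i - x i)` are nonnegative. Hence every
`(x, 0, 0)` with `x ∈ [L, U]`, `f x ≤ 0` and `x = L̆` on `I`, and every `(x, f x, 1)` with
`x ∈ [L, U]`, `0 ≤ f x` and `x = Ŭ` off `I`, lies in `P` and makes the inequality for `I` tight.
Since `f L̆ = M⁻ < 0 < M⁺ = f Ŭ`, such points include `(L̆, 0, 0)`, `(Ŭ, M⁺, 1)` and, for each
`i`, the point obtained by moving `L̆` (if `i ∉ I`) or `Ŭ` (if `i ∈ I`) a small step along the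
`i`-th axis towards the other corner. These `η + 2` points are affinely independent: `z` separates
the two layers, and each axis move is seen by a single coordinate. -/

section LayeredAxisFamily

variable {k ι : Type*} [Field k] [Fintype ι] [DecidableEq ι]

def layeredAxisFamily (a b d z : ι → k) : ι ⊕ Fin 2 → (ι → k) × k :=
  Sum.elim (fun i => (a + z i • (b - a) + Pi.single i (d i), z i)) ![(a, 0), (b, 1)]

theorem affineIndependent_layeredAxisFamily (a b d z : ι → k) (hd : ∀ i, d i ≠ 0) :
    AffineIndependent k (layeredAxisFamily a b d z) := by
  rw [affineIndependent_iff_of_fintype]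
  intro c hc hcq
  rw [Finset.weightedVSub_eq_linear_combination _ hc] at hcq
  simp only [Fintype.sum_sum_type, Fin.sum_univ_two] at hc hcq
  have hz := congrArg Prod.snd hcq
  have hx := fun j => congrFun (congrArg Prod.fst hcq) j
  simp only [layeredAxisFamily, Prod.fst_sum, Prod.snd_sum, Finset.sum_apply, Sum.elim_inl,
    Sum.elim_inr, Prod.smul_mk, Prod.fst_add, Prod.snd_add, Pi.add_apply, Pi.smul_apply,
    Pi.sub_apply, smul_eq_mul, Matrix.cons_val_zero, Matrix.cons_val_one, Prod.fst_zero,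
    Prod.snd_zero, Pi.zero_apply, mul_add, Finset.sum_add_distrib, ← mul_assoc, ← Finset.sum_mul,
    mul_one, Pi.single_apply, mul_ite, mul_zero, Finset.sum_ite_eq, Finset.mem_univ, if_true,
    zero_add] at hz hx
  have hinl : ∀ j, c (.inl j) = 0 := fun j => by
    have : c (.inl j) * d j = 0 := by linear_combination hx j - a j * hc - (b j - a j) * hz
    exact (mul_eq_zero.1 this).resolve_right (hd j)
  simp only [hinl, Finset.sum_const_zero, zero_mul, zero_add] at hc hz
  rintro (j | j)
  · exact hinl j
  · fin_cases j
    · simpa [hz] using hc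
    · exact hz

end LayeredAxisFamily

open Filter Topology in
lemma exists_pos_le_one_forall_mul_le {ι : Type*} [Finite ι] (a : ι → ℝ) {ε : ℝ} (hε : 0 < ε) :
    ∃ t : ℝ, 0 < t ∧ t ≤ 1 ∧ ∀ i, t * a i ≤ ε := by
  have hsmall : ∀ᶠ t in 𝓝 (0 : ℝ), t ≤ 1 ∧ ∀ i, t * a i ≤ ε :=
    (eventually_le_nhds one_pos).and <| eventually_all.2 fun i =>
      ((continuous_mul_const (a i)).tendsto' 0 0 (zero_mul _)).eventually (eventually_le_nhds hε)
  obtain ⟨t, ⟨ht1, hta⟩, ht0⟩ := ((hsmall.filter_mono nhdsWithin_le_nhds).and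
    (self_mem_nhdsWithin : Set.Ioi (0 : ℝ) ∈ 𝓝[>] 0)).exists
  exact ⟨t, ht0, ht1, hta⟩

lemma add_single_mem_Box {η : ℕ} {L U u v : Fin η → ℝ} (hu : u ∈ Box L U) (hv : v ∈ Box L U)
    (i : Fin η) {t : ℝ} (ht0 : 0 ≤ t) (ht1 : t ≤ 1) :
    u + Pi.single i (t * (v i - u i)) ∈ Box L U := by
  intro j
  rcases eq_or_ne j i with rfl | hji
  · simpa using (convex_Icc (L j) (U j)).add_smul_sub_mem (hu j) (hv j) ⟨ht0, ht1⟩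
  · simpa [hji] using hu j

noncomputable def upperBoundRHS {η : ℕ} (w : Fin η → ℝ) (b : ℝ) (L U : Fin η → ℝ)
    (I : Finset (Fin η)) (x : Fin η → ℝ) (z : ℝ) : ℝ :=
  (∑ i ∈ I, w i * (x i - Lbreve w L U i * (1 - z))) + (b + ∑ i ∈ Iᶜ, w i * Ubreve w L U i) * z

section Breve

variable {η : ℕ} (w : Fin η → ℝ) (b : ℝ) {L U : Fin η → ℝ}

lemma upperBoundRHS_zero (I : Finset (Fin η)) (x : Fin η → ℝ) :
    upperBoundRHS w b L U I x 0 = ∑ i ∈ I, w i * (x i - Lbreve w L U i) := by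
  simp [upperBoundRHS]

lemma upperBoundRHS_one (I : Finset (Fin η)) (x : Fin η → ℝ) :
    upperBoundRHS w b L U I x 1 = fAff w b x + ∑ i ∈ Iᶜ, w i * (Ubreve w L U i - x i) := by
  simp only [upperBoundRHS, fAff, sub_self, mul_zero, sub_zero, mul_one, mul_sub, sum_sub_distrib,
    ← sum_add_sum_compl I (fun i => w i * x i)]
  ring

lemma fAff_add_single (x : Fin η → ℝ) (i : Fin η) (δ : ℝ) :
    fAff w b (x + Pi.single i δ) = fAff w b x + w i * δ := by
  simp only [fAff, Pi.add_apply, mul_add, sum_add_distrib, Pi.single_apply, mul_ite, mul_zero,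
    sum_ite_eq', mem_univ, if_true]
  ring

lemma Lbreve_mem_Box (hLU : ∀ i, L i ≤ U i) : Lbreve w L U ∈ Box L U := fun i => by
  unfold Lbreve; split_ifs
  exacts [⟨le_rfl, hLU i⟩, ⟨hLU i, le_rfl⟩]

lemma Ubreve_mem_Box (hLU : ∀ i, L i ≤ U i) : Ubreve w L U ∈ Box L U := fun i => by
  unfold Ubreve; split_ifs
  exacts [⟨hLU i, le_rfl⟩, ⟨le_rfl, hLU i⟩]

lemma Lbreve_ne_Ubreve (hLU : ∀ i, L i < U i) (i : Fin η) : Lbreve w L U i ≠ Ubreve w L U i := by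
  unfold Lbreve Ubreve; split_ifs
  exacts [(hLU i).ne, (hLU i).ne']

lemma mul_sub_Lbreve_nonneg {x : Fin η → ℝ} (hx : x ∈ Box L U) (i : Fin η) :
    0 ≤ w i * (x i - Lbreve w L U i) := by
  unfold Lbreve; split_ifs with hw
  · exact mul_nonneg hw (sub_nonneg.2 (hx i).1)
  · exact mul_nonneg_of_nonpos_of_nonpos (not_le.1 hw).le (sub_nonpos.2 (hx i).2)

lemma mul_Ubreve_sub_nonneg {x : Fin η → ℝ} (hx : x ∈ Box L U) (i : Fin η) :
    0 ≤ w i * (Ubreve w L U i - x i) := by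
  unfold Ubreve; split_ifs with hw
  · exact mul_nonneg hw (sub_nonneg.2 (hx i).2)
  · exact mul_nonneg_of_nonpos_of_nonpos (not_le.1 hw).le (sub_nonpos.2 (hx i).1)

end Breve

section Face

variable {η : ℕ} {w : Fin η → ℝ} {b : ℝ} {L U : Fin η → ℝ} {I : Finset (Fin η)}
  {x : Fin η → ℝ}

lemma mem_Pset_and_eq_upperBoundRHS_zero (hx : x ∈ Box L U) (hf : fAff w b x ≤ 0)
    (hI : ∀ i ∈ I, x i = Lbreve w L U i) :
    (x, ReLU (fAff w b x), 0) ∈ Pset w b L U ∧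
      ReLU (fAff w b x) = upperBoundRHS w b L U I x 0 := by
  have hy : ReLU (fAff w b x) = 0 := max_eq_left hf
  refine ⟨⟨hx, le_max_left _ _, le_rfl, zero_le_one, le_max_right _ _, fun J _ => ?_⟩, ?_⟩
  · change ReLU (fAff w b x) ≤ upperBoundRHS w b L U J x 0
    rw [hy, upperBoundRHS_zero]
    exact sum_nonneg fun i _ => mul_sub_Lbreve_nonneg w hx i
  · rw [hy, upperBoundRHS_zero, sum_eq_zero fun i hi => by rw [hI i hi, sub_self, mul_zero]]

lemma mem_Pset_and_eq_upperBoundRHS_one (hx : x ∈ Box L U) (hf : 0 ≤ fAff w b x)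
    (hI : ∀ i ∉ I, x i = Ubreve w L U i) :
    (x, ReLU (fAff w b x), 1) ∈ Pset w b L U ∧
      ReLU (fAff w b x) = upperBoundRHS w b L U I x 1 := by
  have hy : ReLU (fAff w b x) = fAff w b x := max_eq_right hf
  refine ⟨⟨hx, le_max_left _ _, zero_le_one, le_rfl, le_max_right _ _, fun J _ => ?_⟩, ?_⟩
  · change ReLU (fAff w b x) ≤ upperBoundRHS w b L U J x 1
    rw [hy, upperBoundRHS_one, le_add_iff_nonneg_right]
    exact sum_nonneg fun i _ => mul_Ubreve_sub_nonneg w hx i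
  · rw [hy, upperBoundRHS_one, left_eq_add]
    exact sum_eq_zero fun i hi => by rw [hI i (mem_compl.1 hi), sub_self, mul_zero]

end Face

section FacetFamily

variable {η : ℕ} {w : Fin η → ℝ} {L U : Fin η → ℝ}

noncomputable def facetFamily (w L U : Fin η → ℝ) (I : Finset (Fin η)) (t : ℝ) :
    Fin η ⊕ Fin 2 → (Fin η → ℝ) × ℝ :=
  layeredAxisFamily (Lbreve w L U) (Ubreve w L U)
    (fun i => t * if i ∈ I then Lbreve w L U i - Ubreve w L U i
      else Ubreve w L U i - Lbreve w L U i)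
    (fun i => if i ∈ I then 1 else 0)

lemma affineIndependent_facetFamily (hLU : ∀ i, L i < U i) (I : Finset (Fin η)) {t : ℝ}
    (ht : t ≠ 0) : AffineIndependent ℝ (facetFamily w L U I t) := by
  refine affineIndependent_layeredAxisFamily _ _ _ _ fun i => mul_ne_zero ht ?_
  split_ifs
  exacts [sub_ne_zero.2 (Lbreve_ne_Ubreve w hLU i), sub_ne_zero.2 (Lbreve_ne_Ubreve w hLU i).symm]

lemma facetFamily_mem_Pset_and_eq_upperBoundRHS {b : ℝ} (hLU : ∀ i, L i ≤ U i)
    (I : Finset (Fin η)) {t : ℝ} (ht0 : 0 ≤ t) (ht1 : t ≤ 1)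
    (hneg : fAff w b (Lbreve w L U) ≤ 0) (hpos : 0 ≤ fAff w b (Ubreve w L U))
    (ht : ∀ i, t * (w i * (Ubreve w L U i - Lbreve w L U i))
      ≤ min (-fAff w b (Lbreve w L U)) (fAff w b (Ubreve w L U)))
    (m : Fin η ⊕ Fin 2) :
    let q := facetFamily w L U I t m
    (q.1, ReLU (fAff w b q.1), q.2) ∈ Pset w b L U ∧
      ReLU (fAff w b q.1) = upperBoundRHS w b L U I q.1 q.2 := by
  have hL := Lbreve_mem_Box w hLU
  have hU := Ubreve_mem_Box w hLU
  rcases m with i | j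
  · by_cases hi : i ∈ I
    · have hq : facetFamily w L U I t (.inl i) =
          (Ubreve w L U + Pi.single i (t * (Lbreve w L U i - Ubreve w L U i)), 1) := by
        simp [facetFamily, layeredAxisFamily, hi]
      rw [hq]
      refine mem_Pset_and_eq_upperBoundRHS_one (add_single_mem_Box hU hL i ht0 ht1) ?_
        fun j hj => ?_
      · have := (ht i).trans (min_le_right _ _)
        rw [fAff_add_single]; linarith
      · simp [show j ≠ i by rintro rfl; exact hj hi]
    · have hq : facetFamily w L U I t (.inl i) =
          (Lbreve w L U + Pi.single i (t * (Ubreve w L U i - Lbreve w L U i)), 0) := by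
        simp [facetFamily, layeredAxisFamily, hi]
      rw [hq]
      refine mem_Pset_and_eq_upperBoundRHS_zero (add_single_mem_Box hL hU i ht0 ht1) ?_
        fun j hj => ?_
      · have := (ht i).trans (min_le_left _ _)
        rw [fAff_add_single]; linarith
      · simp [show j ≠ i by rintro rfl; exact hi hj]
  · fin_cases j
    · exact mem_Pset_and_eq_upperBoundRHS_zero hL hneg fun _ _ => rfl
    · exact mem_Pset_and_eq_upperBoundRHS_one hU hpos fun _ _ => rfl

end FacetFamily

theorem upper_bounding_facet_defining_general {η : ℕ} (w : Fin η → ℝ) (b : ℝ)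
    (L U : Fin η → ℝ) (hLU : ∀ i, L i < U i)
    (hMneg : (∑ i, w i * Lbreve w L U i) + b < 0)
    (hMpos : 0 < (∑ i, w i * Ubreve w L U i) + b)
    (I : Finset (Fin η)) :
    ∃ p : Fin (η + 2) → (Fin η → ℝ) × ℝ × ℝ,
      AffineIndependent ℝ p ∧
      ∀ k, p k ∈ Pset w b L U ∧
        (p k).2.1 = (∑ i ∈ I, w i * ((p k).1 i - Lbreve w L U i * (1 - (p k).2.2)))
          + (b + ∑ i ∈ Iᶜ, w i * Ubreve w L U i) * (p k).2.2 := by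
  obtain ⟨t, ht0, ht1, ht⟩ := exists_pos_le_one_forall_mul_le
    (fun i => w i * (Ubreve w L U i - Lbreve w L U i)) (lt_min (neg_pos.2 hMneg) hMpos)
  let q := facetFamily w L U I t ∘ finSumFinEquiv.symm
  have hq : AffineIndependent ℝ q :=
    (affineIndependent_equiv _).2 (affineIndependent_facetFamily hLU I ht0.ne')
  refine ⟨fun k => ((q k).1, ReLU (fAff w b (q k).1), (q k).2), ?_, fun k =>
    facetFamily_mem_Pset_and_eq_upperBoundRHS (b := b) (fun i => (hLU i).le) I ht0.le ht1
      hMneg.le hMpos.le ht _⟩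
  -- forgetting the `y`-coordinate recovers `q`
  refine .of_comp ((LinearMap.fst ℝ _ _).prod
    ((LinearMap.snd ℝ ℝ ℝ).comp (LinearMap.snd ℝ _ _))).toAffineMap ?_
  exact hq

/-- Each upper-bounding inequality of the ideal non-extended formulation is
facet-defining under strict activity. -/
theorem upper_bounding_facet_defining {η : ℕ} (w : Fin η → ℝ) (b : ℝ)
    (L U : Fin η → ℝ) (hLU : ∀ i, L i < U i)
    (hMneg : (∑ i, w i * Lbreve w L U i) + b < 0)
    (hMpos : 0 < (∑ i, w i * Ubreve w L U i) + b)
    (I : Finset (Fin η)) (hI : ∀ i ∈ I, w i ≠ 0) :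
    ∃ p : Fin (η + 2) → (Fin η → ℝ) × ℝ × ℝ,
      AffineIndependent ℝ p ∧
      ∀ k, p k ∈ Pset w b L U ∧
        (p k).2.1 = (∑ i ∈ I, w i * ((p k).1 i - Lbreve w L U i * (1 - (p k).2.2)))
          + (b + ∑ i ∈ Iᶜ, w i * Ubreve w L U i) * (p k).2.2 :=
  upper_bounding_facet_defining_general w b L U hLU hMneg hMpos I
end

section
/- The most violated inequality of the exponential family can be found by componentwise minimization: given any point (x̂, ŷ, ẑ) with x̂ ∈ [L,U], 0 ≤ ŷ, and 0 ≤ ẑ ≤ 1, define Î = {i ∈ supp(w) : w i * x̂ i < w i * (L̆ i * (1 − ẑ) + Ŭ i * ẑ)}. Then for every I ⊆ supp(w), RHS(Î) ≤ RHS(I), where RHS(I) = (∑ i ∈ I, w i * (x̂ i − L̆ i * (1 − ẑ))) + (b + ∑ i ∉ I, w i * Ŭ i) * ẑ; consequently the inequality corresponding to Î has the largest violation ŷ − RHS(I) among the family. -/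
open Finset

/-! The right-hand side of the inequality for `I` is `∑ i ∈ I, dᵢ` plus a constant, where
`dᵢ = wᵢ x̂ᵢ - wᵢ (L̆ᵢ (1 - ẑ) + Ŭᵢ ẑ)`; such a sum is minimized by taking exactly the indices with
`dᵢ < 0`, and these are the indices of `Î`. -/

namespace Finset

variable {ι : Type*} [Fintype ι]

theorem sum_filter_neg_le_sum {M : Type*} [AddCommMonoid M] [LinearOrder M]
    [IsOrderedAddMonoid M] (f : ι → M) (s : Finset ι) :
    ∑ i ∈ univ.filter (fun i => f i < 0), f i ≤ ∑ i ∈ s, f i :=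
  calc ∑ i ∈ univ.filter (fun i => f i < 0), f i
      ≤ ∑ i ∈ s.filter (fun i => f i < 0), f i :=
        sum_le_sum_of_subset_of_nonpos' (filter_subset_filter _ (subset_univ s))
          fun _ hi _ => (mem_filter.1 hi).2.le
    _ ≤ ∑ i ∈ s, f i :=
        sum_le_sum_of_subset_of_nonneg (filter_subset _ s)
          fun _ hi hneg => not_lt.1 fun h => hneg (mem_filter.2 ⟨hi, h⟩)

variable [DecidableEq ι] {R : Type*} [CommRing R]

theorem sum_add_sum_compl_mul_eq (f g : ι → R) (b z : R) (I : Finset ι) :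
    ∑ i ∈ I, f i + (b + ∑ i ∈ Iᶜ, g i) * z
      = ∑ i ∈ I, (f i - g i * z) + (b + ∑ i, g i) * z := by
  rw [← sum_add_sum_compl I g, sum_sub_distrib, ← sum_mul]
  ring

theorem sum_add_sum_compl_mul_le_of_filter_neg [LinearOrder R] [IsOrderedAddMonoid R]
    (f g : ι → R) (b z : R) (I : Finset ι) :
    let Imin := univ.filter (fun i => f i - g i * z < 0)
    ∑ i ∈ Imin, f i + (b + ∑ i ∈ Iminᶜ, g i) * z ≤ ∑ i ∈ I, f i + (b + ∑ i ∈ Iᶜ, g i) * z := by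
  intro Imin
  rw [sum_add_sum_compl_mul_eq, sum_add_sum_compl_mul_eq]
  exact add_le_add_left (sum_filter_neg_le_sum (fun i => f i - g i * z) I) _

end Finset

open scoped Classical in
theorem separation_most_violated_general {η : ℕ} (w : Fin η → ℝ) (b : ℝ)
    (L U : Fin η → ℝ)
    (xh : Fin η → ℝ) (yh zh : ℝ) :
    ∀ I : Finset (Fin η), (∀ i ∈ I, w i ≠ 0) →
      ((∑ i ∈ Finset.univ.filter
            (fun i => w i ≠ 0 ∧
              w i * xh i < w i * (Lbreve w L U i * (1 - zh) + Ubreve w L U i * zh)),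
          w i * (xh i - Lbreve w L U i * (1 - zh)))
        + (b + ∑ i ∈ (Finset.univ.filter
            (fun i => w i ≠ 0 ∧
              w i * xh i < w i * (Lbreve w L U i * (1 - zh) + Ubreve w L U i * zh)))ᶜ,
          w i * Ubreve w L U i) * zh)
      ≤ ((∑ i ∈ I, w i * (xh i - Lbreve w L U i * (1 - zh)))
        + (b + ∑ i ∈ Iᶜ, w i * Ubreve w L U i) * zh)
    ∧
    ∀ I : Finset (Fin η), (∀ i ∈ I, w i ≠ 0) →
      yh - ((∑ i ∈ I, w i * (xh i - Lbreve w L U i * (1 - zh)))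
        + (b + ∑ i ∈ Iᶜ, w i * Ubreve w L U i) * zh)
      ≤ yh - ((∑ i ∈ Finset.univ.filter
            (fun i => w i ≠ 0 ∧
              w i * xh i < w i * (Lbreve w L U i * (1 - zh) + Ubreve w L U i * zh)),
          w i * (xh i - Lbreve w L U i * (1 - zh)))
        + (b + ∑ i ∈ (Finset.univ.filter
            (fun i => w i ≠ 0 ∧
              w i * xh i < w i * (Lbreve w L U i * (1 - zh) + Ubreve w L U i * zh)))ᶜ,
          w i * Ubreve w L U i) * zh) := by
  have hÎ : univ.filter (fun i => w i ≠ 0 ∧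
        w i * xh i < w i * (Lbreve w L U i * (1 - zh) + Ubreve w L U i * zh))
      = univ.filter (fun i =>
          w i * (xh i - Lbreve w L U i * (1 - zh)) - w i * Ubreve w L U i * zh < 0) := by
    refine filter_congr fun i _ => ?_
    rw [and_iff_right_of_imp fun h hw => by simp [hw] at h]
    constructor <;> intro h <;> linarith
  have hmin := sum_add_sum_compl_mul_le_of_filter_neg
    (fun i => w i * (xh i - Lbreve w L U i * (1 - zh))) (fun i => w i * Ubreve w L U i) b zh
  rw [hÎ]
  intro I _
  exact ⟨hmin I, fun J _ => sub_le_sub_left (hmin J) yh⟩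

open scoped Classical in
/-- Linear-time separation: the subset `Î` obtained by componentwise minimization
yields the smallest right-hand side, hence the most violated inequality. -/
theorem separation_most_violated {η : ℕ} (w : Fin η → ℝ) (b : ℝ)
    (L U : Fin η → ℝ) (hLU : ∀ i, L i < U i)
    (xh : Fin η → ℝ) (yh zh : ℝ)
    (hx : xh ∈ Box L U) (hy : 0 ≤ yh) (hz0 : 0 ≤ zh) (hz1 : zh ≤ 1) :
    ∀ I : Finset (Fin η), (∀ i ∈ I, w i ≠ 0) →
      ((∑ i ∈ Finset.univ.filter
            (fun i => w i ≠ 0 ∧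
              w i * xh i < w i * (Lbreve w L U i * (1 - zh) + Ubreve w L U i * zh)),
          w i * (xh i - Lbreve w L U i * (1 - zh)))
        + (b + ∑ i ∈ (Finset.univ.filter
            (fun i => w i ≠ 0 ∧
              w i * xh i < w i * (Lbreve w L U i * (1 - zh) + Ubreve w L U i * zh)))ᶜ,
          w i * Ubreve w L U i) * zh)
      ≤ ((∑ i ∈ I, w i * (xh i - Lbreve w L U i * (1 - zh)))
        + (b + ∑ i ∈ Iᶜ, w i * Ubreve w L U i) * zh)
    ∧
    ∀ I : Finset (Fin η), (∀ i ∈ I, w i ≠ 0) →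
      yh - ((∑ i ∈ I, w i * (xh i - Lbreve w L U i * (1 - zh)))
        + (b + ∑ i ∈ Iᶜ, w i * Ubreve w L U i) * zh)
      ≤ yh - ((∑ i ∈ Finset.univ.filter
            (fun i => w i ≠ 0 ∧
              w i * xh i < w i * (Lbreve w L U i * (1 - zh) + Ubreve w L U i * zh)),
          w i * (xh i - Lbreve w L U i * (1 - zh)))
        + (b + ∑ i ∈ (Finset.univ.filter
            (fun i => w i ≠ 0 ∧
              w i * xh i < w i * (Lbreve w L U i * (1 - zh) + Ubreve w L U i * zh)))ᶜ,
          w i * Ubreve w L U i) * zh) :=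
  separation_most_violated_general w b L U xh yh zh
end

section
/- The big-M formulation is valid for the ReLU neuron: {(x, y) : ∃ z, (z = 0 ∨ z = 1) ∧ (x, y, z) ∈ R} = gr, where R is the LP relaxation of the big-M formulation. -/
open Finset

/-!
Fixing `z = 0`, the constraints `0 ≤ y ≤ M⁺ z` force `y = 0`, and `f x ≤ y` becomes `f x ≤ 0`;
fixing `z = 1`, the constraints `f x ≤ y ≤ f x - M⁻ (1 - z)` force `y = f x ≥ 0`. Together these
two cases are exactly `y = ReLU (f x)`. The remaining big-`M` constraints never cut anything off,
because `M⁻ ≤ f x ≤ M⁺` on the box.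
-/

section BigM

variable {η : ℕ} (w : Fin η → ℝ) (b : ℝ) {L U x : Fin η → ℝ}

theorem mul_Lbreve_le_mul (hx : x ∈ Box L U) (i : Fin η) :
    w i * Lbreve w L U i ≤ w i * x i := by
  unfold Lbreve
  split_ifs with hw
  · exact mul_le_mul_of_nonneg_left (hx i).1 hw
  · exact mul_le_mul_of_nonpos_left (hx i).2 (not_le.mp hw).le

theorem mul_le_mul_Ubreve (hx : x ∈ Box L U) (i : Fin η) :
    w i * x i ≤ w i * Ubreve w L U i := by
  unfold Ubreve
  split_ifs with hw
  · exact mul_le_mul_of_nonneg_left (hx i).2 hw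
  · exact mul_le_mul_of_nonpos_left (hx i).1 (not_le.mp hw).le

theorem Mminus_le_fAff (hx : x ∈ Box L U) :
    (∑ i, w i * Lbreve w L U i) + b ≤ fAff w b x :=
  add_le_add_left (sum_le_sum fun i _ => mul_Lbreve_le_mul w hx i) b

theorem fAff_le_Mplus (hx : x ∈ Box L U) :
    fAff w b x ≤ (∑ i, w i * Ubreve w L U i) + b :=
  add_le_add_left (sum_le_sum fun i _ => mul_le_mul_Ubreve w hx i) b

theorem mem_Rset_zero_iff {y : ℝ} :
    (x, y, 0) ∈ Rset w b L U ↔ x ∈ Box L U ∧ fAff w b x ≤ 0 ∧ y = 0 := by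
  constructor
  · rintro ⟨hx, hy, -, -, hfy, -, hyM⟩
    have hy0 : y = 0 := le_antisymm (by simpa using hyM) hy
    exact ⟨hx, hy0 ▸ hfy, hy0⟩
  · rintro ⟨hx, hf, rfl⟩
    have hM := Mminus_le_fAff w b hx
    refine ⟨hx, le_rfl, le_rfl, zero_le_one, hf, ?_, ?_⟩ <;> simp only <;> linarith

theorem mem_Rset_one_iff {y : ℝ} :
    (x, y, 1) ∈ Rset w b L U ↔ x ∈ Box L U ∧ 0 ≤ fAff w b x ∧ y = fAff w b x := by
  constructor
  · rintro ⟨hx, hy, -, -, hfy, hyf, -⟩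
    have hyf : y = fAff w b x := le_antisymm (by simpa using hyf) hfy
    exact ⟨hx, hyf ▸ hy, hyf⟩
  · rintro ⟨hx, hf, rfl⟩
    have hM := fAff_le_Mplus w b hx
    refine ⟨hx, hf, zero_le_one, le_rfl, le_rfl, ?_, ?_⟩ <;> simp only <;> linarith

end BigM

theorem bigM_valid_general {η : ℕ} (w : Fin η → ℝ) (b : ℝ) (L U : Fin η → ℝ) :
    {p : (Fin η → ℝ) × ℝ |
        ∃ z : ℝ, (z = 0 ∨ z = 1) ∧ (p.1, p.2, z) ∈ Rset w b L U}
      = grSet w b L U := by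
  ext ⟨x, y⟩
  simp only [Set.mem_ofPred_eq, or_and_right, exists_or, exists_eq_left, mem_Rset_zero_iff,
    mem_Rset_one_iff, grSet, Prod.mk.injEq, ReLU, eq_comm (a := y), max_eq_iff]
  aesop

/-- Validity of the big-`M` formulation for the ReLU neuron. -/
theorem bigM_valid {η : ℕ} (w : Fin η → ℝ) (b : ℝ) (L U : Fin η → ℝ)
    (hLU : ∀ i, L i < U i) :
    {p : (Fin η → ℝ) × ℝ |
        ∃ z : ℝ, (z = 0 ∨ z = 1) ∧ (p.1, p.2, z) ∈ Rset w b L U}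
      = grSet w b L U :=
  bigM_valid_general w b L U
end

section
/- The ideal non-extended formulation is a tightening of the big-M formulation: P ⊆ R, i.e. every (x, y, z) ∈ P satisfies y ≤ f x − M⁻ * (1 − z) and y ≤ M⁺ * z. In particular, the big-M upper-bounding constraints coincide with the members of the exponential family corresponding to I = supp(w) and I = ∅, respectively. -/
open Finset

/-- The ideal non-extended formulation tightens the big-`M` formulation:
`P ⊆ R`, i.e. every point of `P` satisfies both big-`M` upper bounds. -/
theorem ideal_tightens_bigM {η : ℕ} (w : Fin η → ℝ) (b : ℝ) (L U : Fin η → ℝ)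
    (hLU : ∀ i, L i < U i) :
    Pset w b L U ⊆ Rset w b L U ∧
    ∀ p ∈ Pset w b L U,
      p.2.1 ≤ fAff w b p.1 - ((∑ i, w i * Lbreve w L U i) + b) * (1 - p.2.2) ∧
      p.2.1 ≤ ((∑ i, w i * Ubreve w L U i) + b) * p.2.2 := by
  have key : ∀ p ∈ Pset w b L U,
      p.2.1 ≤ fAff w b p.1 - ((∑ i, w i * Lbreve w L U i) + b) * (1 - p.2.2) ∧
      p.2.1 ≤ ((∑ i, w i * Ubreve w L U i) + b) * p.2.2 := by
    rintro ⟨x, y, z⟩ ⟨hbox, hy, hz0, hz1, hf, hI⟩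
    constructor
    · have h := hI (Finset.univ.filter fun i => w i ≠ 0)
        (by intro i hi; exact (Finset.mem_filter.mp hi).2)
      have e1 : ∑ i ∈ Finset.univ.filter (fun i => w i ≠ 0),
          w i * (x i - Lbreve w L U i * (1 - z))
          = ∑ i, w i * (x i - Lbreve w L U i * (1 - z)) := by
        apply Finset.sum_filter_of_ne
        intro i _ hne
        intro hw
        apply hne
        rw [hw, zero_mul]
      have e2 : ∑ i ∈ (Finset.univ.filter (fun i => w i ≠ 0))ᶜ,
          w i * Ubreve w L U i = 0 := by
        apply Finset.sum_eq_zero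
        intro i hi
        have : w i = 0 := by
          simpa using (Finset.mem_compl.mp hi)
        rw [this, zero_mul]
      rw [e1, e2] at h
      have e3 : ∑ i, w i * (x i - Lbreve w L U i * (1 - z))
          = (∑ i, w i * x i) - (∑ i, w i * Lbreve w L U i) * (1 - z) := by
        rw [Finset.sum_mul, ← Finset.sum_sub_distrib]
        congr 1; ext i; ring
      rw [e3] at h
      simp only [fAff]
      nlinarith [h]
    · have h := hI ∅ (by intro i hi; simp at hi)
      simp only [Finset.sum_empty, Finset.compl_empty, zero_add] at h
      nlinarith [h]
  exact ⟨fun p hp => ⟨hp.1, hp.2.1, hp.2.2.1, hp.2.2.2.1, hp.2.2.2.2.1,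
    (key p hp).1, (key p hp).2⟩, key⟩
end

section
/- The big-M formulation is not ideal in general: for η = 2, w = (1, 1), b = −3/2, L = (0, 0), U = (1, 1), the point (x̂, ŷ, ẑ) = ((1, 0), 1/4, 1/2) belongs to the big-M LP relaxation R, yet ((1, 0), 1/4) does not belong to convexHull ℝ gr. -/
open Finset

/-- The big-`M` formulation is not ideal: on the instance
`f(x) = x₁ + x₂ - 3/2` over `[0,1]²`, the point `((1,0), 1/4, 1/2)` lies in the
big-`M` LP relaxation, yet `((1,0), 1/4)` is not in the convex hull of the graph. -/
theorem bigM_not_ideal :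
    ((![(1 : ℝ), 0], 1/4, 1/2) : (Fin 2 → ℝ) × ℝ × ℝ)
        ∈ Rset (fun _ => (1 : ℝ)) (-(3/2)) (fun _ => (0 : ℝ)) (fun _ => (1 : ℝ)) ∧
    ((![(1 : ℝ), 0], 1/4) : (Fin 2 → ℝ) × ℝ)
        ∉ convexHull ℝ
            (grSet (fun _ => (1 : ℝ)) (-(3/2)) (fun _ => (0 : ℝ)) (fun _ => (1 : ℝ))) := by

  constructor
  · refine ⟨?_, by norm_num, by norm_num, by norm_num, ?_, ?_, ?_⟩
    · intro i
      fin_cases i <;> norm_num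
    · simp [fAff, Fin.sum_univ_two]
      norm_num
    · simp [fAff, Lbreve, Fin.sum_univ_two]
      norm_num
    · simp [Ubreve, Fin.sum_univ_two]
      norm_num
  · intro h
    have hsub : grSet (fun _ => (1 : ℝ)) (-(3/2)) (fun _ => (0 : ℝ)) (fun _ => (1 : ℝ))
        ⊆ {p : (Fin 2 → ℝ) × ℝ | p.2 ≤ p.1 1 / 2} := by
      rintro p ⟨x, hx, rfl⟩
      have h0 := hx 0
      have h1 := hx 1
      norm_num at h0 h1
      simp only [Set.mem_setOf_eq, ReLU, fAff, Fin.sum_univ_two, one_mul]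
      rw [max_le_iff]
      constructor <;> linarith [h0.1, h0.2, h1.1, h1.2]
    have hconv : Convex ℝ {p : (Fin 2 → ℝ) × ℝ | p.2 ≤ p.1 1 / 2} := by
      intro p hp q hq a c ha hc hac
      simp only [Set.mem_setOf_eq] at *
      simp only [Prod.fst_add, Prod.snd_add, Prod.smul_fst, Prod.smul_snd, Pi.add_apply,
        Pi.smul_apply, smul_eq_mul]
      nlinarith
    have := convexHull_min hsub hconv h
    simp only [Set.mem_setOf_eq, Matrix.cons_val_one, Matrix.head_cons] at this
    norm_num at this
end

section
/- The integrality gap of the big-M formulation can be arbitrarily bad even in fixed dimension: fix γ > 0 and an even η = 2k with k ≥ 1, take w i = 1 for all i, b = 0, L i = −γ, U i = γ, and let x̂ be the alternating point with x̂ i = γ for even-indexed i and x̂ i = −γ for odd-indexed i. Then (x̂, γ*η/2, 1/2) belongs to the big-M LP relaxation R, while every ỹ with (x̂, ỹ) ∈ convexHull ℝ gr satisfies ỹ = 0; hence the big-M relaxation deviates from the tightest convex relaxation at x̂ by at least γ*η/2. -/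
open Finset

lemma alt_sum_zero (c : ℝ) (k : ℕ) :
    ∑ i ∈ Finset.range (2 * k), (if i % 2 = 0 then c else -c) = 0 := by
  induction k with
  | zero => simp
  | succ n ih =>
    have h2 : 2 * (n + 1) = (2 * n) + 1 + 1 := by ring
    rw [h2, Finset.sum_range_succ, Finset.sum_range_succ, ih]
    have e1 : (2 * n) % 2 = 0 := by omega
    have e2 : (2 * n + 1) % 2 = 1 := by omega
    simp [e1, e2]

lemma alt_sum_zero' (c : ℝ) (k : ℕ) :
    ∑ i : Fin (2 * k), (if (i : ℕ) % 2 = 0 then c else -c) = 0 := by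
  rw [Fin.sum_univ_eq_sum_range (fun i => if i % 2 = 0 then c else -c)]
  exact alt_sum_zero c k

/-- The integrality gap of the big-`M` formulation can be arbitrarily bad even in
fixed dimension. -/
theorem bigM_arbitrarily_bad (γ : ℝ) (hγ : 0 < γ) (k : ℕ) (hk : 1 ≤ k) :
    ((fun i : Fin (2 * k) => if (i : ℕ) % 2 = 0 then γ else -γ),
        γ * (2 * k) / 2, (1 : ℝ) / 2)
      ∈ Rset (fun _ => (1 : ℝ)) 0 (fun _ => -γ) (fun _ => γ) ∧
    ∀ ytil : ℝ,
      ((fun i : Fin (2 * k) => if (i : ℕ) % 2 = 0 then γ else -γ), ytil)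
          ∈ convexHull ℝ (grSet (fun _ => (1 : ℝ)) 0 (fun _ => -γ) (fun _ => γ)) →
        ytil = 0 := by
  set η := 2 * k
  set xhat := (fun i : Fin η => if (i : ℕ) % 2 = 0 then γ else -γ) with hxhat
  have hsum : ∑ i : Fin η, xhat i = 0 := alt_sum_zero' γ k
  have hLb : ∀ i : Fin η, Lbreve (fun _ => (1:ℝ)) (fun _ => -γ) (fun _ => γ) i = -γ := by
    intro i; simp [Lbreve]
  have hUb : ∀ i : Fin η, Ubreve (fun _ => (1:ℝ)) (fun _ => -γ) (fun _ => γ) i = γ := by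
    intro i; simp [Ubreve]
  have hcard : (Finset.univ : Finset (Fin η)).card = 2 * k := by simp [η]
  have hsumL : ∑ i : Fin η, (1:ℝ) * Lbreve (fun _ => (1:ℝ)) (fun _ => -γ) (fun _ => γ) i
      = -(2 * k * γ) := by
    simp only [hLb, one_mul, Finset.sum_const, hcard, nsmul_eq_mul]
    push_cast; ring
  have hsumU : ∑ i : Fin η, (1:ℝ) * Ubreve (fun _ => (1:ℝ)) (fun _ => -γ) (fun _ => γ) i
      = 2 * k * γ := by
    simp only [hUb, one_mul, Finset.sum_const, hcard, nsmul_eq_mul]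
    push_cast; ring
  have hfx : fAff (fun _ => (1:ℝ)) 0 xhat = 0 := by
    simp only [fAff, one_mul, add_zero]; exact hsum
  constructor
  · refine ⟨?_, ?_, by norm_num, by norm_num, ?_, ?_, ?_⟩
    · intro i
      by_cases h : (i : ℕ) % 2 = 0 <;> simp [xhat, h] <;> try linarith
    · have : (0:ℝ) ≤ γ * (2 * k) := by positivity
      linarith
    · rw [hfx]; positivity
    · rw [hfx, hsumL]; push_cast; nlinarith [hγ.le, (by exact_mod_cast hk : (1:ℝ) ≤ (k:ℝ))]
    · rw [hsumU]; push_cast; nlinarith [hγ.le]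
  · intro ytil hy
    -- the convex set C
    set C : Set ((Fin η → ℝ) × ℝ) :=
      {p | 0 ≤ p.2 ∧ p.2 ≤ ∑ i : Fin η, (if (i : ℕ) % 2 = 0 then 0 else p.1 i + γ)} with hC
    have hconv : Convex ℝ C := by
      intro p hp q hq a b ha hb hab
      obtain ⟨hp1, hp2⟩ := hp
      obtain ⟨hq1, hq2⟩ := hq
      constructor
      · have : (a • p + b • q).2 = a * p.2 + b * q.2 := by simp [Prod.smul_snd]; try ring
        rw [this]
        have := add_nonneg (mul_nonneg ha hp1) (mul_nonneg hb hq1)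
        linarith
      · have hfst : ∀ i, (a • p + b • q).1 i = a * p.1 i + b * q.1 i := by
          intro i; simp [Prod.smul_fst]; try ring
        have hsnd : (a • p + b • q).2 = a * p.2 + b * q.2 := by simp [Prod.smul_snd]; try ring
        rw [hsnd]
        have hkey : ∑ i : Fin η, (if (i : ℕ) % 2 = 0 then 0 else (a • p + b • q).1 i + γ)
            = a * (∑ i : Fin η, (if (i : ℕ) % 2 = 0 then 0 else p.1 i + γ))
              + b * (∑ i : Fin η, (if (i : ℕ) % 2 = 0 then 0 else q.1 i + γ)) := by
          rw [Finset.mul_sum, Finset.mul_sum, ← Finset.sum_add_distrib]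
          refine Finset.sum_congr rfl fun i _ => ?_
          rw [hfst]
          by_cases h : (i : ℕ) % 2 = 0 <;> simp [h] <;> try nlinarith [hab]
        rw [hkey]
        have := add_le_add (mul_le_mul_of_nonneg_left hp2 ha)
          (mul_le_mul_of_nonneg_left hq2 hb)
        linarith
    have hsub : grSet (fun _ => (1:ℝ)) 0 (fun _ => -γ) (fun _ => γ) ⊆ C := by
      rintro p ⟨x, hx, rfl⟩
      constructor
      · exact le_max_left _ _
      · have hub : ∑ i : Fin η, x i ≤ ∑ i : Fin η, (if (i : ℕ) % 2 = 0 then 0 else x i + γ) := by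
          have step : ∀ i : Fin η, x i - (if (i : ℕ) % 2 = 0 then 0 else x i + γ)
              ≤ (if (i : ℕ) % 2 = 0 then γ else -γ) := by
            intro i
            have h1 : -γ ≤ x i := (hx i).1
            have h2 : x i ≤ γ := (hx i).2
            by_cases h : (i : ℕ) % 2 = 0 <;> simp [h] <;> try linarith
          have : ∑ i : Fin η, (x i - (if (i : ℕ) % 2 = 0 then 0 else x i + γ))
              ≤ ∑ i : Fin η, (if (i : ℕ) % 2 = 0 then γ else -γ) :=
            Finset.sum_le_sum fun i _ => step i
          rw [Finset.sum_sub_distrib, alt_sum_zero' γ k] at this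
          linarith
        have hnn : (0:ℝ) ≤ ∑ i : Fin η, (if (i : ℕ) % 2 = 0 then 0 else x i + γ) := by
          refine Finset.sum_nonneg fun i _ => ?_
          have h1 : -γ ≤ x i := (hx i).1
          by_cases h : (i : ℕ) % 2 = 0 <;> simp [h] <;> try linarith
        have hfa : fAff (fun _ => (1:ℝ)) 0 x = ∑ i : Fin η, x i := by
          simp [fAff]
        simp only [ReLU, hfa]
        exact max_le hnn hub
    have hmem : (xhat, ytil) ∈ C :=
      convexHull_min hsub hconv hy
    obtain ⟨h1, h2⟩ := hmem
    have hx0 : ∑ i : Fin η, (if (i : ℕ) % 2 = 0 then 0 else xhat i + γ) = 0 := by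
      refine Finset.sum_eq_zero fun i _ => ?_
      by_cases h : (i : ℕ) % 2 = 0 <;> simp [xhat, h]
    rw [hx0] at h2
    linarith
end

section
/- The multiple-choice extended formulation is valid for the ReLU neuron: {(x, y) : ∃ z, x⁰, x¹, y⁰, y¹, (z = 0 ∨ z = 1) ∧ (x, y, z, x⁰, x¹, y⁰, y¹) ∈ Q} = gr. -/
open Finset

/-- Validity of the multiple-choice extended formulation for the ReLU neuron. -/
theorem multiple_choice_valid {η : ℕ} (w : Fin η → ℝ) (b : ℝ) (L U : Fin η → ℝ)
    (hLU : ∀ i, L i < U i) :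
    {p : (Fin η → ℝ) × ℝ |
        ∃ (z : ℝ) (x0 x1 : Fin η → ℝ) (y0 y1 : ℝ),
          (z = 0 ∨ z = 1) ∧ (p.1, p.2, z, x0, x1, y0, y1) ∈ Qset w b L U}
      = grSet w b L U := by
  ext ⟨x, y⟩
  simp only [Set.mem_setOf_eq, Qset, grSet, Box, fAff, ReLU]
  constructor
  · rintro ⟨z, x0, x1, y0, y1, hz, hx, hy, hy0, h0, hy1, hy1nn, hb0, hb1, _, _⟩
    rcases hz with rfl | rfl
    · have hx1 : x1 = 0 := by
        funext i
        have h1 := hb1 i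
        simp at h1
        show x1 i = 0
        linarith [h1.1, h1.2]
      have hxx : x = x0 := by rw [hx, hx1]; simp
      have hy1' : y1 = 0 := by simp [hx1] at hy1; exact hy1
      refine ⟨x, fun i => ?_, ?_⟩
      · have := hb0 i
        rw [hxx]; simpa using this
      · have hf : (∑ i, w i * x i) + b ≤ 0 := by
          rw [hxx]; simpa using h0
        have : y = 0 := by rw [hy, hy0, hy1']; ring
        rw [this, max_eq_left hf]
    · have hx0 : x0 = 0 := by
        funext i
        have h1 := hb0 i
        simp at h1
        show x0 i = 0
        linarith [h1.1, h1.2]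
      have hxx : x = x1 := by rw [hx, hx0]; simp
      have hyv : y = (∑ i, w i * x i) + b := by
        rw [hy, hy0, hy1, hxx]; ring
      refine ⟨x, fun i => ?_, ?_⟩
      · have := hb1 i
        rw [hxx]; simpa using this
      · rw [hyv, max_eq_right]
        rw [hy, hy0] at hyv
        rw [← hyv]; linarith [hy1nn]
  · rintro ⟨x, hx, h⟩
    rw [Prod.ext_iff] at h
    obtain ⟨h1, h2⟩ := h
    simp only at h1 h2
    subst h1; subst h2
    by_cases hf : (∑ i, w i * x i) + b ≤ 0
    · refine ⟨0, x, 0, 0, 0, Or.inl rfl, by simp, by simp [max_eq_left hf], rfl,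
        by simpa using hf, by simp, le_refl 0, fun i => by simpa using hx i,
        fun i => by simp, le_refl 0, zero_le_one⟩
    · push_neg at hf
      refine ⟨1, 0, x, 0, (∑ i, w i * x i) + b, Or.inr rfl, by simp,
        by simp [max_eq_right hf.le], rfl, by simp, by simp, hf.le,
        fun i => by simp, fun i => by simpa using hx i, zero_le_one, le_refl 1⟩
end

section
/- The multiple-choice extended formulation is ideal: the LP relaxation Q equals the convex hull of its points with integral indicator, i.e. Q = convexHull ℝ {q ∈ Q : the z-coordinate of q is 0 or 1}. -/
open Finset

lemma mem_Qset_iff {η : ℕ} (w : Fin η → ℝ) (b : ℝ) (L U : Fin η → ℝ)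
    (x : Fin η → ℝ) (y z : ℝ) (x0 x1 : Fin η → ℝ) (y0 y1 : ℝ) :
    (x, y, z, x0, x1, y0, y1) ∈ Qset w b L U ↔
      (x = x0 + x1 ∧ y = y0 + y1 ∧ y0 = 0 ∧
      (∑ i, w i * x0 i) + b * (1 - z) ≤ 0 ∧
      y1 = (∑ i, w i * x1 i) + b * z ∧ 0 ≤ y1 ∧
      (∀ i, L i * (1 - z) ≤ x0 i ∧ x0 i ≤ U i * (1 - z)) ∧
      (∀ i, L i * z ≤ x1 i ∧ x1 i ≤ U i * z) ∧
      0 ≤ z ∧ z ≤ 1) := Iff.rfl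

lemma convex_Qset {η : ℕ} (w : Fin η → ℝ) (b : ℝ) (L U : Fin η → ℝ) :
    Convex ℝ (Qset w b L U) := by
  rintro ⟨px, py, pz, px0, px1, py0, py1⟩ hp ⟨qx, qy, qz, qx0, qx1, qy0, qy1⟩ hq
    a c ha hc hac
  rw [mem_Qset_iff] at hp hq
  obtain ⟨hp1, hp2, hp3, hp4, hp5, hp6, hp7, hp8, hp9, hp10⟩ := hp
  obtain ⟨hq1, hq2, hq3, hq4, hq5, hq6, hq7, hq8, hq9, hq10⟩ := hq
  have hc' : c = 1 - a := by linarith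
  subst hc'
  simp only [Prod.smul_mk, Prod.mk_add_mk, smul_eq_mul]
  rw [mem_Qset_iff]
  have hsum0 : ∀ (u v : Fin η → ℝ), (∑ i, w i * (a • u + (1 - a) • v) i)
      = a * (∑ i, w i * u i) + (1 - a) * (∑ i, w i * v i) := by
    intro u v
    simp only [Pi.add_apply, Pi.smul_apply, smul_eq_mul, mul_add, Finset.sum_add_distrib,
      Finset.mul_sum]
    congr 1 <;> exact Finset.sum_congr rfl fun i _ => by ring
  refine ⟨?_, ?_, ?_, ?_, ?_, ?_, ?_, ?_, ?_, ?_⟩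
  · funext i
    have h1 := congrFun hp1 i
    have h2 := congrFun hq1 i
    simp only [Pi.add_apply, Pi.smul_apply, smul_eq_mul] at *
    linear_combination a * h1 + (1 - a) * h2
  · rw [hp2, hq2]; ring
  · rw [hp3, hq3]; ring
  · rw [hsum0]
    nlinarith [mul_le_mul_of_nonneg_left hp4 ha, mul_le_mul_of_nonneg_left hq4 hc]
  · rw [hsum0, hp5, hq5]; ring
  · exact add_nonneg (mul_nonneg ha hp6) (mul_nonneg hc hq6)
  · intro i
    have h1 := hp7 i; have h2 := hq7 i
    simp only [Pi.add_apply, Pi.smul_apply, smul_eq_mul]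
    constructor
    · nlinarith [mul_le_mul_of_nonneg_left h1.1 ha, mul_le_mul_of_nonneg_left h2.1 hc]
    · nlinarith [mul_le_mul_of_nonneg_left h1.2 ha, mul_le_mul_of_nonneg_left h2.2 hc]
  · intro i
    have h1 := hp8 i; have h2 := hq8 i
    simp only [Pi.add_apply, Pi.smul_apply, smul_eq_mul]
    constructor
    · nlinarith [mul_le_mul_of_nonneg_left h1.1 ha, mul_le_mul_of_nonneg_left h2.1 hc]
    · nlinarith [mul_le_mul_of_nonneg_left h1.2 ha, mul_le_mul_of_nonneg_left h2.2 hc]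
  · positivity
  · nlinarith [mul_le_mul_of_nonneg_left hp10 ha, mul_le_mul_of_nonneg_left hq10 hc]

/-- The multiple-choice extended formulation is ideal. -/
theorem multiple_choice_ideal {η : ℕ} (w : Fin η → ℝ) (b : ℝ) (L U : Fin η → ℝ)
    (hLU : ∀ i, L i < U i) :
    Qset w b L U = convexHull ℝ
      {q ∈ Qset w b L U | q.2.2.1 = 0 ∨ q.2.2.1 = 1} := by
  apply Set.Subset.antisymm
  · rintro ⟨x, y, z, x0, x1, y0, y1⟩ hq
    have hQ := (mem_Qset_iff w b L U x y z x0 x1 y0 y1).mp hq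
    obtain ⟨h1, h2, h3, h4, h5, h6, h7, h8, h9, h10⟩ := hQ
    by_cases hz0 : z = 0
    · exact subset_convexHull ℝ _ ⟨hq, Or.inl hz0⟩
    by_cases hz1 : z = 1
    · exact subset_convexHull ℝ _ ⟨hq, Or.inr hz1⟩
    have hz : 0 < z := lt_of_le_of_ne h9 (Ne.symm hz0)
    have ht : 0 < 1 - z := by
      rcases lt_or_eq_of_le h10 with h | h
      · linarith
      · exact absurd h hz1
    set A : (Fin η → ℝ) × ℝ × ℝ × (Fin η → ℝ) × (Fin η → ℝ) × ℝ × ℝ :=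
      (fun i => x0 i / (1 - z), 0, 0, fun i => x0 i / (1 - z), 0, 0, 0) with hA
    set B : (Fin η → ℝ) × ℝ × ℝ × (Fin η → ℝ) × (Fin η → ℝ) × ℝ × ℝ :=
      (fun i => x1 i / z, y1 / z, 1, 0, fun i => x1 i / z, 0, y1 / z) with hB
    have hsumA : (∑ i, w i * (x0 i / (1 - z))) = (∑ i, w i * x0 i) / (1 - z) := by
      rw [Finset.sum_div]
      exact Finset.sum_congr rfl fun i _ => (mul_div_assoc _ _ _).symm
    have hsumB : (∑ i, w i * (x1 i / z)) = (∑ i, w i * x1 i) / z := by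
      rw [Finset.sum_div]
      exact Finset.sum_congr rfl fun i _ => (mul_div_assoc _ _ _).symm
    have hAmem : A ∈ Qset w b L U := by
      rw [hA, mem_Qset_iff]
      refine ⟨by funext i; simp, by norm_num, rfl, ?_, by simp, le_refl 0, ?_, by simp, le_refl 0, zero_le_one⟩
      · rw [hsumA]
        have : (∑ i, w i * x0 i) / (1 - z) ≤ -b := by
          rw [div_le_iff₀ ht]; linarith
        linarith
      · intro i
        have h := h7 i
        constructor
        · rw [sub_zero, mul_one, le_div_iff₀ ht]; linarith [h.1]
        · rw [sub_zero, mul_one, div_le_iff₀ ht]; linarith [h.2]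
    have hBmem : B ∈ Qset w b L U := by
      rw [hB, mem_Qset_iff]
      refine ⟨by funext i; simp, by norm_num, rfl, by simp, ?_, div_nonneg h6 hz.le, by simp, ?_, zero_le_one, le_refl 1⟩
      · rw [hsumB, h5, mul_one, add_div, mul_div_cancel_right₀ b (ne_of_gt hz)]
      · intro i
        have h := h8 i
        constructor
        · rw [mul_one, le_div_iff₀ hz]; linarith [h.1]
        · rw [mul_one, div_le_iff₀ hz]; linarith [h.2]
    have hEq : (x, y, z, x0, x1, y0, y1) = (1 - z) • A + z • B := by
      rw [hA, hB]
      simp only [Prod.smul_mk, Prod.mk_add_mk, smul_eq_mul, Prod.mk.injEq]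
      refine ⟨?_, ?_, by ring, ?_, ?_, by rw [h3]; ring, ?_⟩
      · funext i
        simp only [Pi.add_apply, Pi.smul_apply, smul_eq_mul]
        rw [mul_div_cancel₀ _ (ne_of_gt ht), mul_div_cancel₀ _ (ne_of_gt hz)]
        exact congrFun h1 i
      · rw [mul_zero, mul_div_cancel₀ _ (ne_of_gt hz), zero_add]
        linarith [h2, h3]
      · funext i
        simp only [Pi.add_apply, Pi.smul_apply, smul_eq_mul, Pi.zero_apply]
        rw [mul_div_cancel₀ _ (ne_of_gt ht)]; ring
      · funext i
        simp only [Pi.add_apply, Pi.smul_apply, smul_eq_mul, Pi.zero_apply]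
        rw [mul_div_cancel₀ _ (ne_of_gt hz)]; ring
      · rw [mul_zero, mul_div_cancel₀ _ (ne_of_gt hz), zero_add]
    have hA' : A ∈ {q ∈ Qset w b L U | q.2.2.1 = 0 ∨ q.2.2.1 = 1} :=
      ⟨hAmem, Or.inl (by rw [hA])⟩
    have hB' : B ∈ {q ∈ Qset w b L U | q.2.2.1 = 0 ∨ q.2.2.1 = 1} :=
      ⟨hBmem, Or.inr (by rw [hB])⟩
    rw [hEq]
    exact (convex_convexHull ℝ _) (subset_convexHull ℝ _ hA')
      (subset_convexHull ℝ _ hB') ht.le hz.le (by ring)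
  · exact convexHull_min (fun q hq => hq.1) (convex_Qset w b L U)
end

section
/- Projecting out the auxiliary continuous variables of the multiple-choice extended formulation yields exactly the ideal non-extended relaxation: for every (x, y, z) ∈ (Fin η → ℝ) × ℝ × ℝ, there exist x⁰, x¹ : Fin η → ℝ and y⁰, y¹ : ℝ with (x, y, z, x⁰, x¹, y⁰, y¹) ∈ Q if and only if (x, y, z) ∈ P. -/
open Finset

/-! The fibre of `Q` over `(x, y, z)` is cut out by the box of admissible `x¹` (a product of
intervals, hence connected) and the single equation `w · x¹ + b z = y`. The point `z x` of the box
gives `w · x¹ + b z ≤ y` because `y ≥ z f(x) + (1 - z) · 0`, and coordinatewise maximisation shows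
that the largest value of `w · x¹` on the box is the tightest right-hand side of the inequalities
of `P`. The intermediate value theorem on the box then produces `x¹`. -/

theorem Finset.sum_min_le_sum_add_sum_compl {ι M : Type*} [Fintype ι] [DecidableEq ι]
    [AddCommMonoid M] [LinearOrder M] [IsOrderedAddMonoid M] (f g : ι → M) (I : Finset ι) :
    ∑ i, min (f i) (g i) ≤ ∑ i ∈ I, f i + ∑ i ∈ Iᶜ, g i := by
  rw [← sum_add_sum_compl I]
  exact add_le_add (sum_le_sum fun i _ => min_le_left _ _)
    (sum_le_sum fun i _ => min_le_right _ _)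

theorem Finset.sum_min_eq_sum_add_sum_compl {ι M : Type*} [Fintype ι] [DecidableEq ι]
    [AddCommMonoid M] [LinearOrder M] {f g : ι → M} {I : Finset ι}
    (hf : ∀ i ∈ I, f i ≤ g i) (hg : ∀ i ∉ I, g i ≤ f i) :
    ∑ i, min (f i) (g i) = ∑ i ∈ I, f i + ∑ i ∈ Iᶜ, g i := by
  rw [← sum_add_sum_compl I]
  congr 1
  · exact sum_congr rfl fun i hi => min_eq_left (hf i hi)
  · exact sum_congr rfl fun i hi => min_eq_right (hg i (mem_compl.1 hi))

theorem mul_ite_le_mul {c p q s : ℝ} (hp : p ≤ s) (hq : s ≤ q) :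
    c * (if 0 ≤ c then p else q) ≤ c * s := by
  split_ifs with hc
  · exact mul_le_mul_of_nonneg_left hp hc
  · exact mul_le_mul_of_nonpos_left hq (le_of_not_ge hc)

theorem mul_le_mul_ite {c p q s : ℝ} (hp : p ≤ s) (hq : s ≤ q) :
    c * s ≤ c * (if 0 ≤ c then q else p) := by
  split_ifs with hc
  · exact mul_le_mul_of_nonneg_left hq hc
  · exact mul_le_mul_of_nonpos_left hp (le_of_not_ge hc)

/-- `t` is an admissible value of the coordinate `x¹` of `Q` over the coordinate `x` of
the box `[l, u]`, the coordinate `x⁰` being `x - t`. -/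
def IsSplit (l u x z t : ℝ) : Prop :=
  (l * (1 - z) ≤ x - t ∧ x - t ≤ u * (1 - z)) ∧ (l * z ≤ t ∧ t ≤ u * z)

namespace IsSplit

variable {l u x z t : ℝ}

theorem mem_Icc (h : IsSplit l u x z t) : x ∈ Set.Icc l u := by
  obtain ⟨⟨h₀l, h₀u⟩, h₁l, h₁u⟩ := h
  constructor <;> linarith

theorem mul_le_min (h : IsSplit l u x z t) (c : ℝ) :
    c * t ≤ min (c * (x - (if 0 ≤ c then l else u) * (1 - z)))
      (c * (if 0 ≤ c then u else l) * z) := by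
  obtain ⟨⟨h₀l, h₀u⟩, h₁l, h₁u⟩ := h
  refine le_min ?_ ?_
  · have := mul_ite_le_mul (c := c) h₀l h₀u
    rw [ite_mul]
    linarith [mul_sub c x t, mul_sub c x (if 0 ≤ c then l * (1 - z) else u * (1 - z))]
  · rw [mul_assoc, ite_mul]
    exact mul_le_mul_ite h₁l h₁u

end IsSplit

theorem isSplit_mul_self {l u x z : ℝ} (hx : x ∈ Set.Icc l u) (hz₀ : 0 ≤ z) (hz₁ : z ≤ 1) :
    IsSplit l u x z (z * x) := by
  obtain ⟨hl, hu⟩ := hx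
  refine ⟨⟨?_, ?_⟩, ?_, ?_⟩ <;> nlinarith

/-- Multiplied by `c`, the two candidates are the two terms of the minimum in `idealBound`. -/
theorem isSplit_or_isSplit {l u x z : ℝ} (c : ℝ) (hx : x ∈ Set.Icc l u) (hz₀ : 0 ≤ z)
    (hz₁ : z ≤ 1) :
    IsSplit l u x z (x - (if 0 ≤ c then l else u) * (1 - z)) ∨
      IsSplit l u x z ((if 0 ≤ c then u else l) * z) := by
  obtain ⟨hl, hu⟩ := hx
  unfold IsSplit
  split_ifs
  · rcases le_total (x - l * (1 - z)) (u * z) with h | h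
    · left; refine ⟨⟨?_, ?_⟩, ?_, ?_⟩ <;> nlinarith
    · right; refine ⟨⟨?_, ?_⟩, ?_, ?_⟩ <;> nlinarith
  · rcases le_total (l * z) (x - u * (1 - z)) with h | h
    · left; refine ⟨⟨?_, ?_⟩, ?_, ?_⟩ <;> nlinarith
    · right; refine ⟨⟨?_, ?_⟩, ?_, ?_⟩ <;> nlinarith

theorem ordConnected_setOf_isSplit (l u x z : ℝ) : {t | IsSplit l u x z t}.OrdConnected := by
  refine ⟨fun a ha c hc t ht => ?_⟩
  obtain ⟨⟨ha₀l, ha₀u⟩, ha₁l, ha₁u⟩ := ha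
  obtain ⟨⟨hc₀l, hc₀u⟩, hc₁l, hc₁u⟩ := hc
  obtain ⟨hat, htc⟩ := ht
  refine ⟨⟨?_, ?_⟩, ?_, ?_⟩ <;> linarith

section Fibre

variable {η : ℕ} {w : Fin η → ℝ} {b : ℝ} {L U x : Fin η → ℝ} {y z : ℝ}

/-- The admissible `x¹` of `Q` over `(x, z)`. -/
def splitFiber (L U x : Fin η → ℝ) (z : ℝ) : Set (Fin η → ℝ) :=
  Set.univ.pi fun i => {t | IsSplit (L i) (U i) (x i) z t}

theorem isPreconnected_splitFiber (L U x : Fin η → ℝ) (z : ℝ) :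
    IsPreconnected (splitFiber L U x z) :=
  isPreconnected_univ_pi fun _ => (ordConnected_setOf_isSplit _ _ _ _).isPreconnected

theorem mem_Box_of_mem_splitFiber {x₁ : Fin η → ℝ} (h : x₁ ∈ splitFiber L U x z) :
    x ∈ Box L U :=
  fun i => (h i (Set.mem_univ i)).mem_Icc

/-- The least right-hand side, without `b z`, of the inequalities of `P` indexed by `I ⊆ supp w`. -/
noncomputable def idealBound (w L U x : Fin η → ℝ) (z : ℝ) : ℝ :=
  ∑ i, min (w i * (x i - Lbreve w L U i * (1 - z))) (w i * Ubreve w L U i * z)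

theorem sum_mul_le_idealBound {x₁ : Fin η → ℝ} (h : x₁ ∈ splitFiber L U x z) :
    ∑ i, w i * x₁ i ≤ idealBound w L U x z :=
  sum_le_sum fun i _ => (h i (Set.mem_univ i)).mul_le_min (w i)

theorem exists_mem_splitFiber_idealBound_le (hx : x ∈ Box L U) (hz₀ : 0 ≤ z) (hz₁ : z ≤ 1) :
    ∃ x₁ ∈ splitFiber L U x z, idealBound w L U x z ≤ ∑ i, w i * x₁ i := by
  have hcoord : ∀ i, ∃ t, IsSplit (L i) (U i) (x i) z t ∧
      min (w i * (x i - Lbreve w L U i * (1 - z))) (w i * Ubreve w L U i * z) ≤ w i * t := by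
    intro i
    rcases isSplit_or_isSplit (w i) (hx i) hz₀ hz₁ with h | h
    · exact ⟨_, h, min_le_left _ _⟩
    · exact ⟨_, h, (min_le_right _ _).trans_eq (mul_assoc _ _ _)⟩
  choose x₁ hx₁ using hcoord
  exact ⟨x₁, fun i _ => (hx₁ i).1, sum_le_sum fun i _ => (hx₁ i).2⟩

theorem exists_mem_splitFiber_sum_mul_add_le (hx : x ∈ Box L U) (hz₀ : 0 ≤ z) (hz₁ : z ≤ 1)
    (hy : 0 ≤ y) (hf : fAff w b x ≤ y) :
    ∃ x₁ ∈ splitFiber L U x z, ∑ i, w i * x₁ i + b * z ≤ y := by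
  refine ⟨z • x, fun i _ => isSplit_mul_self (hx i) hz₀ hz₁, ?_⟩
  have hsum : ∑ i, w i * (z • x) i = z * ∑ i, w i * x i := by
    rw [mul_sum]
    exact sum_congr rfl fun i _ => by simp only [Pi.smul_apply, smul_eq_mul]; ring
  rw [hsum]
  unfold fAff at hf
  nlinarith [mul_le_mul_of_nonneg_left hf hz₀, mul_nonneg (sub_nonneg.2 hz₁) hy]

theorem exists_mem_Qset_iff :
    (∃ (x₀ x₁ : Fin η → ℝ) (y₀ y₁ : ℝ), (x, y, z, x₀, x₁, y₀, y₁) ∈ Qset w b L U) ↔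
      0 ≤ z ∧ z ≤ 1 ∧ 0 ≤ y ∧ fAff w b x ≤ y ∧
        ∃ x₁ ∈ splitFiber L U x z, ∑ i, w i * x₁ i + b * z = y := by
  constructor
  · rintro ⟨x₀, x₁, y₀, y₁, rfl, rfl, rfl, h₀, rfl, hy₁, hb₀, hb₁, hz₀, hz₁⟩
    refine ⟨hz₀, hz₁, by simpa using hy₁, ?_, x₁, fun i _ => ?_, (zero_add _).symm⟩
    · simp only [fAff, Pi.add_apply, mul_add, sum_add_distrib]
      linarith
    · simpa [IsSplit] using And.intro (hb₀ i) (hb₁ i)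
  · rintro ⟨hz₀, hz₁, hy, hf, x₁, hx₁, rfl⟩
    refine ⟨x - x₁, x₁, 0, _, sub_add_cancel x x₁ |>.symm, (zero_add _).symm, rfl, ?_, rfl, hy,
      fun i => (hx₁ i (Set.mem_univ i)).1, fun i => (hx₁ i (Set.mem_univ i)).2, hz₀, hz₁⟩
    simp only [fAff] at hf
    simp only [Pi.sub_apply, mul_sub, sum_sub_distrib]
    linarith

theorem forall_le_iff_le_idealBound_add :
    (∀ I : Finset (Fin η), (∀ i ∈ I, w i ≠ 0) →
      y ≤ (∑ i ∈ I, w i * (x i - Lbreve w L U i * (1 - z)))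
        + (b + ∑ i ∈ Iᶜ, w i * Ubreve w L U i) * z) ↔
      y ≤ idealBound w L U x z + b * z := by
  have hrhs : ∀ I : Finset (Fin η), (∑ i ∈ I, w i * (x i - Lbreve w L U i * (1 - z)))
      + (b + ∑ i ∈ Iᶜ, w i * Ubreve w L U i) * z
      = (∑ i ∈ I, w i * (x i - Lbreve w L U i * (1 - z)))
        + (∑ i ∈ Iᶜ, w i * Ubreve w L U i * z) + b * z := by
    intro I
    rw [add_mul, sum_mul]
    ring
  simp only [hrhs]
  constructor
  · intro h
    classical
    let I := univ.filter fun i =>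
      w i ≠ 0 ∧ w i * (x i - Lbreve w L U i * (1 - z)) ≤ w i * Ubreve w L U i * z
    rw [idealBound, sum_min_eq_sum_add_sum_compl (I := I)]
    · exact h I fun i hi => (mem_filter.1 hi).2.1
    · exact fun i hi => (mem_filter.1 hi).2.2
    · intro i hi
      by_cases hw : w i = 0
      · simp [hw]
      · exact le_of_not_ge fun hle => hi (mem_filter.2 ⟨mem_univ i, hw, hle⟩)
  · intro h I _
    exact h.trans (by gcongr; exact sum_min_le_sum_add_sum_compl _ _ I)

end Fibre

theorem projection_of_extended_eq_ideal_general {η : ℕ} (w : Fin η → ℝ) (b : ℝ)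
    (L U : Fin η → ℝ)
    (x : Fin η → ℝ) (y z : ℝ) :
    (∃ (x0 x1 : Fin η → ℝ) (y0 y1 : ℝ),
        (x, y, z, x0, x1, y0, y1) ∈ Qset w b L U)
      ↔ (x, y, z) ∈ Pset w b L U := by
  rw [exists_mem_Qset_iff, Pset, Set.mem_ofPred_eq, forall_le_iff_le_idealBound_add]
  constructor
  · rintro ⟨hz₀, hz₁, hy, hf, x₁, hx₁, rfl⟩
    exact ⟨mem_Box_of_mem_splitFiber hx₁, hy, hz₀, hz₁, hf,
      add_le_add_left (sum_mul_le_idealBound hx₁) _⟩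
  · rintro ⟨hx, hy, hz₀, hz₁, hf, hle⟩
    obtain ⟨u, hu, hu_le⟩ := exists_mem_splitFiber_sum_mul_add_le hx hz₀ hz₁ hy hf
    obtain ⟨v, hv, hv_ge⟩ := exists_mem_splitFiber_idealBound_le (w := w) hx hz₀ hz₁
    have hcont : Continuous fun x₁ : Fin η → ℝ => ∑ i, w i * x₁ i := by fun_prop
    obtain ⟨x₁, hx₁, hx₁y⟩ := (isPreconnected_splitFiber L U x z).intermediate_value hu hv
      hcont.continuousOn ⟨le_sub_iff_add_le.2 hu_le, by linarith⟩
    exact ⟨hz₀, hz₁, hy, hf, x₁, hx₁, by simp only at hx₁y; linarith⟩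

/-- Projecting out the auxiliary continuous variables of the multiple-choice
extended formulation yields exactly the ideal non-extended relaxation `P`. -/
theorem projection_of_extended_eq_ideal {η : ℕ} (w : Fin η → ℝ) (b : ℝ)
    (L U : Fin η → ℝ) (hLU : ∀ i, L i < U i)
    (x : Fin η → ℝ) (y z : ℝ) :
    (∃ (x0 x1 : Fin η → ℝ) (y0 y1 : ℝ),
        (x, y, z, x0, x1, y0, y1) ∈ Qset w b L U)
      ↔ (x, y, z) ∈ Pset w b L U :=
  projection_of_extended_eq_ideal_general w b L U x y z
end

section
/- The exponential family of lower-bounding inequalities produced by Fourier–Motzkin elimination is redundant: assume w i ≥ 0 for all i. If (x, y, z) satisfies x ∈ [L,U], 0 ≤ y, 0 ≤ z ≤ 1, and f x ≤ y, then for every I ⊆ supp(w): (∑ i ∈ I, w i * x i) − (∑ i ∈ I, w i * U i) * (1 − z) + (b + ∑ i ∉ I, w i * L i) * z ≤ y. -/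
open Finset

/-- The exponential family of lower-bounding inequalities from Fourier–Motzkin
elimination is redundant when `w ≥ 0`. -/
theorem lower_family_redundant {η : ℕ} (w : Fin η → ℝ) (hw : ∀ i, 0 ≤ w i)
    (b : ℝ) (L U : Fin η → ℝ) (hLU : ∀ i, L i < U i)
    (x : Fin η → ℝ) (y z : ℝ)
    (hx : x ∈ Box L U) (hy : 0 ≤ y) (hz0 : 0 ≤ z) (hz1 : z ≤ 1)
    (hfy : fAff w b x ≤ y) :
    ∀ I : Finset (Fin η), (∀ i ∈ I, w i ≠ 0) →
      (∑ i ∈ I, w i * x i) - (∑ i ∈ I, w i * U i) * (1 - z)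
        + (b + ∑ i ∈ Iᶜ, w i * L i) * z ≤ y := by
  intro I _
  have h1 : (∑ i ∈ I, w i * x i) ≤ (∑ i ∈ I, w i * U i) :=
    Finset.sum_le_sum fun i _ => mul_le_mul_of_nonneg_left (hx i).2 (hw i)
  have h2 : (∑ i ∈ Iᶜ, w i * L i) ≤ (∑ i ∈ Iᶜ, w i * x i) :=
    Finset.sum_le_sum fun i _ => mul_le_mul_of_nonneg_left (hx i).1 (hw i)
  have h3 : (∑ i ∈ I, w i * x i) + (∑ i ∈ Iᶜ, w i * x i) = ∑ i, w i * x i :=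
    Finset.sum_add_sum_compl I _
  have hf : (∑ i, w i * x i) + b ≤ y := hfy
  nlinarith [mul_nonneg hz0 (sub_nonneg.mpr h2), mul_nonneg (sub_nonneg.mpr hz1) (sub_nonneg.mpr h1), mul_le_mul_of_nonneg_left hf hz0, mul_nonneg (sub_nonneg.mpr hz1) hy]
end

section
/- Strict activity holds exactly when the ReLU neuron is genuinely nonlinear on the box: (i) every x ∈ [L,U] satisfies ReLU(f x) = 0 if and only if M⁺ ≤ 0, and (ii) every x ∈ [L,U] satisfies ReLU(f x) = f x if and only if 0 ≤ M⁻. Consequently, M⁻ < 0 < M⁺ if and only if the graph gr differs from both the graph of the zero function on [L,U] and the graph of f on [L,U]. -/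
open Finset

lemma Lbreve_mem {η : ℕ} (w L U : Fin η → ℝ) (hLU : ∀ i, L i < U i) :
    Lbreve w L U ∈ Box L U := by
  intro i
  unfold Lbreve
  split <;> constructor <;> first | rfl | exact (hLU i).le

lemma Ubreve_mem {η : ℕ} (w L U : Fin η → ℝ) (hLU : ∀ i, L i < U i) :
    Ubreve w L U ∈ Box L U := by
  intro i
  unfold Ubreve
  split <;> constructor <;> first | rfl | exact (hLU i).le

lemma fAff_le_max {η : ℕ} (w : Fin η → ℝ) (b : ℝ) (L U : Fin η → ℝ)
    {x : Fin η → ℝ} (hx : x ∈ Box L U) :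
    fAff w b x ≤ fAff w b (Ubreve w L U) := by
  unfold fAff
  have : ∑ i, w i * x i ≤ ∑ i, w i * Ubreve w L U i := by
    apply Finset.sum_le_sum
    intro i _
    unfold Ubreve
    split
    · exact mul_le_mul_of_nonneg_left (hx i).2 ‹_›
    · exact mul_le_mul_of_nonpos_left (hx i).1 (le_of_not_ge ‹_›)
  linarith

lemma min_le_fAff {η : ℕ} (w : Fin η → ℝ) (b : ℝ) (L U : Fin η → ℝ)
    {x : Fin η → ℝ} (hx : x ∈ Box L U) :
    fAff w b (Lbreve w L U) ≤ fAff w b x := by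
  unfold fAff
  have : ∑ i, w i * Lbreve w L U i ≤ ∑ i, w i * x i := by
    apply Finset.sum_le_sum
    intro i _
    unfold Lbreve
    split
    · exact mul_le_mul_of_nonneg_left (hx i).1 ‹_›
    · exact mul_le_mul_of_nonpos_left (hx i).2 (le_of_not_ge ‹_›)
  linarith

/-- Strict activity holds exactly when the ReLU neuron is genuinely nonlinear on
the box. -/
theorem strict_activity_characterization {η : ℕ} (w : Fin η → ℝ) (b : ℝ)
    (L U : Fin η → ℝ) (hLU : ∀ i, L i < U i) :
    ((∀ x ∈ Box L U, ReLU (fAff w b x) = 0)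
        ↔ (∑ i, w i * Ubreve w L U i) + b ≤ 0) ∧
    ((∀ x ∈ Box L U, ReLU (fAff w b x) = fAff w b x)
        ↔ 0 ≤ (∑ i, w i * Lbreve w L U i) + b) ∧
    (((∑ i, w i * Lbreve w L U i) + b < 0 ∧ 0 < (∑ i, w i * Ubreve w L U i) + b)
        ↔ (grSet w b L U ≠ {p | ∃ x ∈ Box L U, p = (x, 0)} ∧
           grSet w b L U ≠ {p | ∃ x ∈ Box L U, p = (x, fAff w b x)})) := by
  have hUmem := Ubreve_mem w L U hLU
  have hLmem := Lbreve_mem w L U hLU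
  have h1 : (∀ x ∈ Box L U, ReLU (fAff w b x) = 0)
      ↔ (∑ i, w i * Ubreve w L U i) + b ≤ 0 := by
    constructor
    · intro h
      have := h _ hUmem
      have : fAff w b (Ubreve w L U) ≤ 0 := by
        by_contra hc
        push_neg at hc
        simp [ReLU, max_eq_right hc.le] at this
        linarith
      simpa [fAff] using this
    · intro h x hx
      have : fAff w b x ≤ 0 := le_trans (fAff_le_max w b L U hx) (by simpa [fAff] using h)
      simp [ReLU, max_eq_left this]
  have h2 : (∀ x ∈ Box L U, ReLU (fAff w b x) = fAff w b x)
      ↔ 0 ≤ (∑ i, w i * Lbreve w L U i) + b := by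
    constructor
    · intro h
      have := h _ hLmem
      have : 0 ≤ fAff w b (Lbreve w L U) := by
        by_contra hc
        push_neg at hc
        simp [ReLU, max_eq_left hc.le] at this
        linarith
      simpa [fAff] using this
    · intro h x hx
      have : 0 ≤ fAff w b x := le_trans (by simpa [fAff] using h) (min_le_fAff w b L U hx)
      simp [ReLU, max_eq_right this]
  refine ⟨h1, h2, ?_⟩
  constructor
  · rintro ⟨hneg, hpos⟩
    constructor
    · intro hg
      have hmem : (Ubreve w L U, ReLU (fAff w b (Ubreve w L U))) ∈ grSet w b L U :=
        ⟨_, hUmem, rfl⟩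
      rw [hg] at hmem
      obtain ⟨x, _, hx⟩ := hmem
      rw [Prod.mk.injEq] at hx
      have hy : ReLU (fAff w b (Ubreve w L U)) = 0 := hx.2
      have : fAff w b (Ubreve w L U) ≤ 0 := by
        by_contra hc
        push_neg at hc
        simp [ReLU, max_eq_right hc.le] at hy
        linarith
      simp [fAff] at this
      linarith
    · intro hg
      have hmem : (Lbreve w L U, ReLU (fAff w b (Lbreve w L U))) ∈ grSet w b L U :=
        ⟨_, hLmem, rfl⟩
      rw [hg] at hmem
      obtain ⟨x, _, hx⟩ := hmem
      rw [Prod.mk.injEq] at hx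
      have hy : ReLU (fAff w b (Lbreve w L U)) = fAff w b (Lbreve w L U) := by
        rw [hx.2, hx.1]
      have : 0 ≤ fAff w b (Lbreve w L U) := by
        by_contra hc
        push_neg at hc
        simp [ReLU, max_eq_left hc.le] at hy
        linarith
      simp [fAff] at this
      linarith
  · rintro ⟨hg1, hg2⟩
    constructor
    · by_contra hc
      push_neg at hc
      apply hg2
      ext p
      constructor
      · rintro ⟨x, hx, rfl⟩
        exact ⟨x, hx, by rw [h2.mpr hc x hx]⟩
      · rintro ⟨x, hx, rfl⟩
        exact ⟨x, hx, by rw [h2.mpr hc x hx]⟩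
    · by_contra hc
      push_neg at hc
      apply hg1
      ext p
      constructor
      · rintro ⟨x, hx, rfl⟩
        exact ⟨x, hx, by rw [h1.mpr hc x hx]⟩
      · rintro ⟨x, hx, rfl⟩
        exact ⟨x, hx, by rw [h1.mpr hc x hx]⟩
end
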